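/- arXiv:1806.05613 — 8 statements merged into one kernel-verified Lean document; each statement's English description precedes it below -/
import Mathlib

section
/- Let E be a finite-dimensional vector space over a field k and let v be a prevaluation on E. Then the value set v(E) = {v(e) : e ∈ E, e ≠ 0} is finite and has cardinality at most dim E. -/
/-- A prevaluation on a vector space `E` over a field `k`. -/
def IsPrevaluation (k : Type*) [Field k] {E : Type*} [AddCommGroup E] [Module k E]
    (v : E → ℚ) : Prop :=
  (∀ (c : k) (e : E), c ≠ 0 → e ≠ 0 → v (c • e) = v e) ∧
  (∀ e₁ e₂ : E, e₁ ≠ 0 → e₂ ≠ 0 → e₁ + e₂ ≠ 0 → min (v e₁) (v e₂) ≤ v (e₁ + e₂))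

/-- The sublevel submodule `{e | v e ≥ q} ∪ {0}` of a prevaluation. -/
def prevalSub {k E : Type*} [Field k] [AddCommGroup E] [Module k E]
    (v : E → ℚ) (hv : IsPrevaluation k v) (q : ℚ) : Submodule k E where
  carrier := {e | e ≠ 0 → q ≤ v e}
  zero_mem' := fun h => absurd rfl h
  add_mem' := by
    intro a b ha hb hab
    by_cases ha0 : a = 0
    · subst ha0; rw [zero_add] at hab ⊢; exact hb hab
    by_cases hb0 : b = 0
    · subst hb0; rw [add_zero] at hab ⊢; exact ha hab
    calc q ≤ min (v a) (v b) := le_min (ha ha0) (hb hb0)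
      _ ≤ v (a + b) := hv.2 a b ha0 hb0 hab
  smul_mem' := by
    intro c a ha hca
    have hc0 : c ≠ 0 := fun h => hca (by simp [h])
    have ha0 : a ≠ 0 := fun h => hca (by simp [h])
    rw [hv.1 c a hc0 ha0]
    exact ha ha0

/-- The value set `v(E \ {0})` of a prevaluation on a finite-dimensional vector
space `E` is finite, of cardinality at most `dim E`. -/
theorem stmt1 {k E : Type*} [Field k] [AddCommGroup E] [Module k E] [FiniteDimensional k E]
    (v : E → ℚ) (hv : IsPrevaluation k v) :
    (v '' {e : E | e ≠ 0}).Finite ∧ (v '' {e : E | e ≠ 0}).ncard ≤ Module.finrank k E := by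
  classical
  set n := Module.finrank k E with hn
  set S := v '' {e : E | e ≠ 0} with hS
  set g : ℚ → ℕ := fun q => Module.finrank k (prevalSub v hv q) with hg
  -- strict antitonicity on S
  have hmem : ∀ q ∈ S, ∀ q' : ℚ, q' ≤ q → ∃ e, e ∈ prevalSub v hv q' ∧ e ≠ 0 ∧ v e = q := by
    rintro q ⟨e, he, rfl⟩ q' hq'
    exact ⟨e, fun _ => hq', he, rfl⟩
  have hanti : ∀ q q', q ≤ q' → prevalSub v hv q' ≤ prevalSub v hv q := by
    intro q q' h e he he0
    exact h.trans (he he0)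
  have hlt : ∀ q ∈ S, ∀ q' ∈ S, q < q' → prevalSub v hv q' < prevalSub v hv q := by
    intro q hq q' hq' hqq'
    refine lt_of_le_of_ne (hanti q q' hqq'.le) ?_
    obtain ⟨e, heq, he0, hve⟩ := hmem q hq q le_rfl
    intro h
    have : e ∈ prevalSub v hv q' := h ▸ heq
    have := this he0
    rw [hve] at this
    exact absurd this (not_le.mpr hqq')
  have hglt : ∀ q ∈ S, ∀ q' ∈ S, q < q' → g q' < g q := by
    intro q hq q' hq' h
    exact Submodule.finrank_lt_finrank_of_lt (hlt q hq q' hq' h)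
  have hinj : Set.InjOn g S := by
    intro q hq q' hq' h
    rcases lt_trichotomy q q' with hc | hc | hc
    · exact absurd h (hglt q hq q' hq' hc).ne'
    · exact hc
    · exact absurd h (hglt q' hq' q hq hc).ne
  have hsub : g '' S ⊆ Set.Icc 1 n := by
    rintro _ ⟨q, hq, rfl⟩
    constructor
    · obtain ⟨e, heq, he0, _⟩ := hmem q hq q le_rfl
      have : prevalSub v hv q ≠ ⊥ := by
        intro h
        rw [h] at heq
        exact he0 (Submodule.mem_bot k |>.mp heq)
      have : 0 < g q := by
        rw [hg]
        exact Module.finrank_pos_iff.mpr (Submodule.nontrivial_iff_ne_bot.mpr this)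
      omega
    · exact Submodule.finrank_le _
  have hfin : S.Finite :=
    Set.Finite.of_finite_image ((Set.finite_Icc 1 n).subset hsub) hinj
  refine ⟨hfin, ?_⟩
  calc S.ncard = (g '' S).ncard := (Set.ncard_image_of_injOn hinj).symm
    _ ≤ (Set.Icc 1 n).ncard :=
        Set.ncard_le_ncard hsub (Set.finite_Icc 1 n)
    _ = n := by rw [Set.ncard_eq_toFinset_card', Set.toFinset_Icc, Nat.card_Icc]; omega
end

section
/- Let E be a finite-dimensional vector space over a field k. There is a bijection between the set of prevaluations v : E \ {0} → ℚ on E and the set of labeled flags in E, i.e. pairs (F_•, c_•) consisting of a flag of subspaces F_• = ({0} ⊊ F₁ ⊊ ⋯ ⊊ F_k = E) together with a strictly decreasing sequence c_• = (c₁ > ⋯ > c_k) of rational numbers; the bijection sends v to the flag whose subspaces are the distinct sets F_{v≥c} = {e ∈ E : v(e) ≥ c} ∪ {0} for c in the value set {c₁ > ⋯ > c_k} = v(E \ {0}), with F_i = F_{v≥c_i} labeled by c_i. -/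
/-- A prevaluation on a vector space `E` over a field `k`:
a function `v : E \ {0} → ℚ` invariant under nonzero scalings and satisfying
the non-Archimedean inequality. -/
def IsPreval (k : Type*) [Field k] {E : Type*} [AddCommGroup E] [Module k E]
    (v : {e : E // e ≠ 0} → ℚ) : Prop :=
  (∀ (c : k) (hc : c ≠ 0) (e : E) (he : e ≠ 0),
      v ⟨c • e, smul_ne_zero hc he⟩ = v ⟨e, he⟩) ∧
  (∀ (e₁ e₂ : E) (h₁ : e₁ ≠ 0) (h₂ : e₂ ≠ 0) (h : e₁ + e₂ ≠ 0),
      min (v ⟨e₁, h₁⟩) (v ⟨e₂, h₂⟩) ≤ v ⟨e₁ + e₂, h⟩)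

/-- A labeled flag in `E`: a strictly increasing chain of nonzero subspaces
`F₁ ⊊ ⋯ ⊊ F_len = E`, each labeled by a rational number, with the labels
strictly decreasing along the chain. -/
structure LabeledFlag (k E : Type*) [Field k] [AddCommGroup E] [Module k E] where
  len : ℕ
  len_pos : 0 < len
  F : Fin len → Submodule k E
  c : Fin len → ℚ
  strictMono_F : StrictMono F
  ne_bot : ∀ i, F i ≠ ⊥
  last_eq_top : F ⟨len - 1, Nat.sub_lt len_pos Nat.one_pos⟩ = ⊤
  strictAnti_c : StrictAnti c

/-! Superlevel sets `F_{v ≥ q}` of a prevaluation are subspaces, strictly decreasing in `q` along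
the value set, so finite dimension leaves only finitely many values, and the superlevel sets at
these values form a labeled flag. Conversely a labeled flag gives the prevaluation
`e ↦ max {c_i : e ∈ F_i}`, which takes every label as a value and whose superlevel sets are the
`F_i`. The two constructions are inverse to each other since a labeled flag is determined by its
set of labels together with the subspace carrying each label. -/

open Set

theorem eq_of_mem_range_of_forall_le_iff {ι α : Type*} [PartialOrder α] {f : ι → α} {a b : α}
    (ha : a ∈ range f) (hb : b ∈ range f) (h : ∀ i, f i ≤ a ↔ f i ≤ b) : a = b := by
  obtain ⟨i, rfl⟩ := ha
  obtain ⟨j, rfl⟩ := hb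
  exact le_antisymm ((h i).1 le_rfl) ((h j).2 le_rfl)

section Prevaluations

variable {k E : Type*} [Field k] [AddCommGroup E] [Module k E]

namespace IsPreval

variable {v : {e : E // e ≠ 0} → ℚ}

/-- The subspace `F_{v ≥ q}`. -/
def superlevel (hv : IsPreval k v) (q : ℚ) : Submodule k E where
  carrier := {e : E | e = 0 ∨ ∃ he : e ≠ 0, q ≤ v ⟨e, he⟩}
  zero_mem' := Or.inl rfl
  add_mem' := by
    rintro a b (rfl | ⟨ha, hva⟩) hb
    · simpa using hb
    rcases hb with rfl | ⟨hb, hvb⟩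
    · simpa using Or.inr ⟨ha, hva⟩
    by_cases hab : a + b = 0
    · exact Or.inl hab
    · exact Or.inr ⟨hab, (le_min hva hvb).trans (hv.2 a b ha hb hab)⟩
  smul_mem' := by
    rintro c e (rfl | ⟨he, hve⟩)
    · simp
    by_cases hc : c = 0
    · simp [hc]
    · exact Or.inr ⟨smul_ne_zero hc he, (hv.1 c hc e he).symm ▸ hve⟩

theorem mem_superlevel (hv : IsPreval k v) {q : ℚ} {e : E} (he : e ≠ 0) :
    e ∈ hv.superlevel q ↔ q ≤ v ⟨e, he⟩ :=
  ⟨by rintro (rfl | ⟨_, h⟩); exacts [absurd rfl he, h], fun h => Or.inr ⟨he, h⟩⟩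

theorem superlevel_antitone (hv : IsPreval k v) : Antitone hv.superlevel := by
  rintro q q' hqq' e (rfl | ⟨he, h⟩)
  exacts [Or.inl rfl, Or.inr ⟨he, hqq'.trans h⟩]

theorem superlevel_lt_superlevel (hv : IsPreval k v) {q q' : ℚ} (h : q < q')
    (hq : q ∈ range v) : hv.superlevel q' < hv.superlevel q := by
  obtain ⟨⟨e, he⟩, rfl⟩ := hq
  refine SetLike.lt_iff_le_and_exists.2
    ⟨hv.superlevel_antitone h.le, e, (hv.mem_superlevel he).2 le_rfl, fun h' => ?_⟩
  exact h.not_ge ((hv.mem_superlevel he).1 h')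

variable [FiniteDimensional k E]

-- A strictly decreasing chain of subspaces has at most `finrank k E + 1` members.
theorem finite_range (hv : IsPreval k v) : (range v).Finite := by
  have hanti : StrictAntiOn (fun q => Module.finrank k (hv.superlevel q)) (range v) :=
    fun q hq _ _ h => Submodule.finrank_lt_finrank_of_lt (hv.superlevel_lt_superlevel h hq)
  refine Set.Finite.of_finite_image ((finite_Iic (Module.finrank k E)).subset ?_) hanti.injOn
  rintro _ ⟨q, -, rfl⟩
  exact Submodule.finrank_le _

/-- The values of `v` in decreasing order. -/
noncomputable def labels (hv : IsPreval k v) : Fin hv.finite_range.toFinset.card → ℚ :=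
  fun i => hv.finite_range.toFinset.orderEmbOfFin rfl i.rev

theorem strictAnti_labels (hv : IsPreval k v) : StrictAnti hv.labels :=
  (OrderEmbedding.strictMono _).comp_strictAnti Fin.rev_strictAnti

theorem range_labels (hv : IsPreval k v) : range hv.labels = range v := by
  refine (Fin.rev_surjective.range_comp _).trans ?_
  rw [Finset.range_orderEmbOfFin, Set.Finite.coe_toFinset]

theorem labels_mem_range (hv : IsPreval k v) (i : Fin hv.finite_range.toFinset.card) :
    hv.labels i ∈ range v :=
  hv.range_labels ▸ mem_range_self i

variable [Nontrivial E]

noncomputable def toLabeledFlag (hv : IsPreval k v) : LabeledFlag k E where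
  len := hv.finite_range.toFinset.card
  len_pos := by
    obtain ⟨e, he⟩ := exists_ne (0 : E)
    exact Finset.card_pos.2 ⟨v ⟨e, he⟩, by simp⟩
  F i := hv.superlevel (hv.labels i)
  c := hv.labels
  strictMono_F _ _ hij :=
    hv.superlevel_lt_superlevel (hv.strictAnti_labels hij) (hv.labels_mem_range _)
  ne_bot i := by
    obtain ⟨⟨e, he⟩, hei⟩ := hv.labels_mem_range i
    exact (Submodule.ne_bot_iff _).2 ⟨e, (hv.mem_superlevel he).2 hei.ge, he⟩
  last_eq_top := by
    refine eq_top_iff.2 fun e _ => ?_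
    rcases eq_or_ne e 0 with rfl | he
    · exact Submodule.zero_mem _
    obtain ⟨j, hj⟩ : v ⟨e, he⟩ ∈ range hv.labels := hv.range_labels.symm ▸ mem_range_self _
    refine (hv.mem_superlevel he).2 (hj ▸ hv.strictAnti_labels.antitone ?_)
    exact Fin.le_def.2 (Nat.le_sub_one_of_lt j.2)
  strictAnti_c := hv.strictAnti_labels

theorem range_toLabeledFlag_c (hv : IsPreval k v) : range hv.toLabeledFlag.c = range v :=
  hv.range_labels

end IsPreval

namespace LabeledFlag

variable (L : LabeledFlag k E)

open Classical in
noncomputable def value (e : E) : ℚ :=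
  (Finset.univ.filter (e ∈ L.F ·)).sup'
    ⟨⟨L.len - 1, Nat.sub_lt L.len_pos Nat.one_pos⟩, by simp [L.last_eq_top]⟩ L.c

theorem exists_mem_F_value_eq (e : E) : ∃ i, e ∈ L.F i ∧ L.value e = L.c i := by
  classical
  obtain ⟨i, hi, h⟩ := Finset.exists_mem_eq_sup' _ L.c
  exact ⟨i, (Finset.mem_filter.1 hi).2, h⟩

variable {L}

theorem mem_F_iff_le_value {e : E} {i : Fin L.len} : e ∈ L.F i ↔ L.c i ≤ L.value e := by
  classical
  refine ⟨fun h => Finset.le_sup' L.c (Finset.mem_filter.2 ⟨Finset.mem_univ _, h⟩), fun h => ?_⟩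
  obtain ⟨j, hj, hval⟩ := L.exists_mem_F_value_eq e
  rw [hval, L.strictAnti_c.le_iff_ge] at h
  exact L.strictMono_F.monotone h hj

theorem value_eq_of_forall_mem_F_iff {x y : E} (h : ∀ i, x ∈ L.F i ↔ y ∈ L.F i) :
    L.value x = L.value y := by
  obtain ⟨i, hi, hx⟩ := L.exists_mem_F_value_eq x
  obtain ⟨j, hj, hy⟩ := L.exists_mem_F_value_eq y
  refine le_antisymm ?_ ?_
  · rw [hx, ← mem_F_iff_le_value]; exact (h i).1 hi
  · rw [hy, ← mem_F_iff_le_value]; exact (h j).2 hj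

theorem isPreval_value : IsPreval k fun e : {e : E // e ≠ 0} => L.value e := by
  refine ⟨fun a ha e _ => value_eq_of_forall_mem_F_iff fun i => Submodule.smul_mem_iff _ ha,
    fun e₁ e₂ _ _ _ => ?_⟩
  obtain ⟨i₁, h₁, hv₁⟩ := L.exists_mem_F_value_eq e₁
  obtain ⟨i₂, h₂, hv₂⟩ := L.exists_mem_F_value_eq e₂
  change min (L.value e₁) (L.value e₂) ≤ L.value (e₁ + e₂)
  rw [hv₁, hv₂, ← L.strictAnti_c.antitone.map_max, ← mem_F_iff_le_value]
  exact add_mem (L.strictMono_F.monotone (le_max_left _ _) h₁)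
    (L.strictMono_F.monotone (le_max_right _ _) h₂)

variable (L) in
noncomputable def toPreval : {v : {e : E // e ≠ 0} → ℚ // IsPreval k v} :=
  ⟨fun e => L.value e, isPreval_value⟩

theorem exists_ne_zero_mem_F_forall_lt_notMem (i : Fin L.len) :
    ∃ e ∈ L.F i, e ≠ 0 ∧ ∀ j < i, e ∉ L.F j := by
  by_cases hi : IsMin i
  · obtain ⟨e, he, hne⟩ := (Submodule.ne_bot_iff _).1 (L.ne_bot i)
    exact ⟨e, he, hne, fun j hj _ => hj.not_ge (hi hj.le)⟩
  · obtain ⟨e, he, hne⟩ := SetLike.exists_of_lt (L.strictMono_F (Order.pred_lt_of_not_isMin hi))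
    exact ⟨e, he, fun h => hne (h ▸ zero_mem _),
      fun j hj hej => hne (L.strictMono_F.monotone (Order.le_pred_of_lt hj) hej)⟩

theorem range_toPreval : range L.toPreval.1 = range L.c := by
  refine Subset.antisymm ?_ ?_
  · rintro _ ⟨e, rfl⟩
    obtain ⟨i, -, h⟩ := L.exists_mem_F_value_eq e.1
    exact ⟨i, h.symm⟩
  · rintro _ ⟨i, rfl⟩
    obtain ⟨e, he, hne, hlt⟩ := exists_ne_zero_mem_F_forall_lt_notMem i
    obtain ⟨j, hj, hval⟩ := L.exists_mem_F_value_eq e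
    refine ⟨⟨e, hne⟩, le_antisymm ?_ (mem_F_iff_le_value.1 he)⟩
    change L.value e ≤ L.c i
    rw [hval, L.strictAnti_c.le_iff_ge]
    exact not_lt.1 fun h => hlt j h hj

theorem eq_of_range_c_eq {L₁ L₂ : LabeledFlag k E} (hc : range L₁.c = range L₂.c)
    (hF : ∀ i j, L₁.c i = L₂.c j → L₁.F i = L₂.F j) : L₁ = L₂ := by
  have hlen : L₁.len = L₂.len := by
    simpa [ncard_range_of_injective L₁.strictAnti_c.injective,
      ncard_range_of_injective L₂.strictAnti_c.injective] using congrArg ncard hc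
  obtain ⟨n, _, F₁, c₁, _, _, _, hc₁⟩ := L₁
  obtain ⟨_, _, F₂, c₂, _, _, _, hc₂⟩ := L₂
  subst hlen
  obtain rfl : c₁ = c₂ := (hc₁.range_inj hc₂).1 hc
  obtain rfl : F₁ = F₂ := funext fun i => hF i i rfl
  rfl

theorem toPreval_injective : Function.Injective (toPreval : LabeledFlag k E → _) := by
  intro L₁ L₂ h
  refine eq_of_range_c_eq (by rw [← range_toPreval, ← range_toPreval, h]) fun i j hij => ?_
  have hvalue : ∀ e ≠ 0, L₁.value e = L₂.value e :=
    fun e he => congrFun (congrArg Subtype.val h) ⟨e, he⟩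
  ext e
  rcases eq_or_ne e 0 with rfl | he
  · simp only [zero_mem]
  rw [mem_F_iff_le_value, mem_F_iff_le_value, hij, hvalue e he]

end LabeledFlag

theorem IsPreval.toPreval_toLabeledFlag [FiniteDimensional k E] [Nontrivial E]
    {v : {e : E // e ≠ 0} → ℚ} (hv : IsPreval k v) : hv.toLabeledFlag.toPreval = ⟨v, hv⟩ := by
  refine Subtype.ext (funext fun ⟨e, he⟩ => ?_)
  refine eq_of_mem_range_of_forall_le_iff (f := hv.toLabeledFlag.c) ?_
    (hv.range_toLabeledFlag_c ▸ mem_range_self _) fun i => ?_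
  · rw [← LabeledFlag.range_toPreval]; exact mem_range_self _
  · exact LabeledFlag.mem_F_iff_le_value.symm.trans (hv.mem_superlevel he)

noncomputable def prevalEquivLabeledFlag [FiniteDimensional k E] [Nontrivial E] :
    {v : {e : E // e ≠ 0} → ℚ // IsPreval k v} ≃ LabeledFlag k E where
  toFun v := v.2.toLabeledFlag
  invFun := LabeledFlag.toPreval
  left_inv v := v.2.toPreval_toLabeledFlag
  right_inv := Function.LeftInverse.rightInverse_of_injective
    (fun v => v.2.toPreval_toLabeledFlag) LabeledFlag.toPreval_injective

end Prevaluations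

/-- There is a bijection between prevaluations on `E` and labeled flags in `E`,
sending `v` to the flag of subspaces `F_{v ≥ c_i}` for `c₁ > ⋯ > c_k` the value
set of `v`, with `F_i = F_{v ≥ c_i}` labeled by `c_i`. -/
theorem stmt3 {k E : Type*} [Field k] [AddCommGroup E] [Module k E]
    [FiniteDimensional k E] [Nontrivial E] :
    ∃ Θ : {v : {e : E // e ≠ 0} → ℚ // IsPreval k v} ≃ LabeledFlag k E,
      ∀ v : {v : {e : E // e ≠ 0} → ℚ // IsPreval k v},
        Set.range (Θ v).c = Set.range v.1 ∧
        ∀ i, ((Θ v).F i : Set E)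
            = {e : E | e = 0 ∨ ∃ he : e ≠ 0, (Θ v).c i ≤ v.1 ⟨e, he⟩} :=
  ⟨prevalEquivLabeledFlag, fun v => ⟨v.2.range_toLabeledFlag_c, fun _ => rfl⟩⟩
end

section
/- Let E, E' be finite-dimensional vector spaces over a field k and let v, v' be prevaluations on E and E' respectively. For every nonzero w ∈ E ⊗ E', the set of numbers min_i (v(e_i) + v'(e'_i)), taken over all representations w = Σ_i e_i ⊗ e'_i as a finite sum of nonzero pure tensors, has a maximum; and the function v ⊗ v' : (E ⊗ E') \ {0} → ℚ defined by (v ⊗ v')(w) = max{ min_i (v(e_i) + v'(e'_i)) : w = Σ_i e_i ⊗ e'_i } is a prevaluation on E ⊗ E'. -/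
open scoped TensorProduct

/-- For `w ∈ E ⊗ E'`, the set of numbers `min_i (v (e i) + v' (e' i))` over all
representations `w = ∑ i, e i ⊗ e' i` as a finite sum of nonzero pure tensors. -/
def tensorVals (k : Type*) [Field k] {E E' : Type*} [AddCommGroup E] [Module k E]
    [AddCommGroup E'] [Module k E'] (v : E → ℚ) (v' : E' → ℚ) (w : E ⊗[k] E') : Set ℚ :=
  {q : ℚ | ∃ (m : ℕ) (hm : 0 < m) (e : Fin m → E) (e' : Fin m → E'),
      (∀ i, e i ≠ 0) ∧ (∀ i, e' i ≠ 0) ∧ w = ∑ i, e i ⊗ₜ[k] e' i ∧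
      q = Finset.univ.inf' ⟨⟨0, hm⟩, Finset.mem_univ _⟩ (fun i => v (e i) + v' (e' i))}

section aux

variable {k : Type*} [Field k] {E E' : Type*} [AddCommGroup E] [Module k E]
    [AddCommGroup E'] [Module k E']

/-- The subspace of vectors of prevaluation `≥ q` (together with `0`). -/
def valSub (v : E → ℚ) (hv : IsPrevaluation k v) (q : ℚ) : Submodule k E where
  carrier := {e | e = 0 ∨ q ≤ v e}
  zero_mem' := Or.inl rfl
  add_mem' := by
    rintro a b (rfl | ha) hb
    · simpa using hb
    · rcases hb with rfl | hb
      · simpa using Or.inr ha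
      · by_cases hab : a + b = 0
        · exact Or.inl hab
        · by_cases ha0 : a = 0
          · subst ha0; simpa using Or.inr hb
          · by_cases hb0 : b = 0
            · subst hb0; simpa using Or.inr ha
            · exact Or.inr <| le_trans (le_min ha hb) (hv.2 a b ha0 hb0 hab)
  smul_mem' := by
    intro c e he
    by_cases hc : c = 0
    · simp [hc]
    by_cases he0 : e = 0
    · simp [he0]
    rcases he with rfl | he
    · simp
    · exact Or.inr <| by rw [hv.1 c e hc he0]; exact he

theorem preval_image_finite [FiniteDimensional k E] {v : E → ℚ}
    (hv : IsPrevaluation k v) : (v '' {e | e ≠ 0}).Finite := by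
  rw [← Set.finite_coe_iff]
  set n := Module.finrank k E
  have hle : ∀ q : ℚ, Module.finrank k (valSub v hv q) < n + 1 :=
    fun q => Nat.lt_succ_of_le (Submodule.finrank_le _)
  have key : ∀ q₁ q₂ : ℚ, q₁ ∈ v '' {e | e ≠ 0} → q₁ < q₂ →
      valSub v hv q₂ < valSub v hv q₁ := by
    rintro q₁ q₂ ⟨e, he, rfl⟩ hlt
    refine lt_of_le_of_ne (fun x hx => ?_) (fun hEq => ?_)
    · rcases hx with rfl | hx
      · exact Or.inl rfl
      · exact Or.inr (le_trans hlt.le hx)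
    · have h1 : e ∈ valSub v hv (v e) := Or.inr le_rfl
      rw [← hEq] at h1
      rcases h1 with rfl | h1
      · exact he rfl
      · exact absurd h1 (not_le.2 hlt)
    
  have hinj : Function.Injective
      (fun q : v '' {e | e ≠ 0} =>
        (⟨Module.finrank k (valSub v hv (q : ℚ)), hle _⟩ : Fin (n + 1))) := by
    intro q₁ q₂ h
    simp only [Fin.mk.injEq] at h
    by_contra hne
    rcases lt_or_gt_of_ne (fun h' => hne (Subtype.ext h')) with hlt | hlt
    · exact absurd h (ne_of_gt (Submodule.finrank_lt_finrank_of_lt (key _ _ q₁.2 hlt)))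
    · exact absurd h (ne_of_lt (Submodule.finrank_lt_finrank_of_lt (key _ _ q₂.2 hlt)))
  exact Finite.of_injective _ hinj

variable (v : E → ℚ) (v' : E' → ℚ)

theorem tensorVals_subset (w : E ⊗[k] E') :
    tensorVals k v v' w ⊆ Set.image2 (· + ·) (v '' {e | e ≠ 0}) (v' '' {e | e ≠ 0}) := by
  rintro q ⟨m, hm, e, e', he, he', hw, rfl⟩
  obtain ⟨i, -, hi⟩ := Finset.exists_mem_eq_inf' ⟨⟨0, hm⟩, Finset.mem_univ _⟩
    (fun i => v (e i) + v' (e' i))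
  rw [hi]
  exact ⟨v (e i), ⟨e i, he i, rfl⟩, v' (e' i), ⟨e' i, he' i, rfl⟩, rfl⟩

theorem tensorVals_finite [FiniteDimensional k E] [FiniteDimensional k E']
    (hv : IsPrevaluation k v) (hv' : IsPrevaluation k v') (w : E ⊗[k] E') :
    (tensorVals k v v' w).Finite :=
  Set.Finite.subset (Set.Finite.image2 _ (preval_image_finite hv) (preval_image_finite hv'))
    (tensorVals_subset v v' w)

theorem tensorVals_nonempty (w : E ⊗[k] E') (hw : w ≠ 0) :
    (tensorVals k v v' w).Nonempty := by
  classical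
  obtain ⟨S, hS⟩ := TensorProduct.exists_finset w
  set S' : Finset (E × E') := S.filter (fun p => p.1 ≠ 0 ∧ p.2 ≠ 0) with hS'
  have hsum : w = ∑ p ∈ S', p.1 ⊗ₜ[k] p.2 := by
    rw [hS, ← Finset.sum_filter_add_sum_filter_not S (fun p => p.1 ≠ 0 ∧ p.2 ≠ 0)]
    have : ∑ p ∈ S.filter (fun p => ¬(p.1 ≠ 0 ∧ p.2 ≠ 0)), p.1 ⊗ₜ[k] p.2 = 0 := by
      refine Finset.sum_eq_zero fun p hp => ?_
      rw [Finset.mem_filter] at hp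
      rcases not_and_or.1 hp.2 with h | h
      · rw [not_not.1 h, TensorProduct.zero_tmul]
      · rw [not_not.1 h, TensorProduct.tmul_zero]
    rw [this, add_zero]
  have hne : S'.Nonempty := by
    rcases Finset.eq_empty_or_nonempty S' with h | h
    · exact absurd (by rw [hsum, h, Finset.sum_empty]) hw
    · exact h
  set m := S'.card with hm'
  have hm : 0 < m := Finset.card_pos.2 hne
  set eq := S'.equivFin
  set e : Fin m → E := fun i => ((eq.symm i : S') : E × E').1 with he_def
  set e' : Fin m → E' := fun i => ((eq.symm i : S') : E × E').2 with he'_def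
  have hmem : ∀ i, ((eq.symm i : S') : E × E') ∈ S' := fun i => (eq.symm i).2
  refine ⟨_, m, hm, e, e', fun i => ((Finset.mem_filter.1 (hmem i)).2).1,
    fun i => ((Finset.mem_filter.1 (hmem i)).2).2, ?_, rfl⟩
  rw [hsum, ← Finset.sum_coe_sort S' (fun p => p.1 ⊗ₜ[k] p.2),
    ← Equiv.sum_comp eq.symm (fun p : S' => (p : E × E').1 ⊗ₜ[k] (p : E × E').2)]

theorem tensorVals_smul_subset (hv : IsPrevaluation k v) {c : k} (hc : c ≠ 0)
    (w : E ⊗[k] E') : tensorVals k v v' w ⊆ tensorVals k v v' (c • w) := by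
  rintro q ⟨m, hm, e, e', he, he', hw, rfl⟩
  refine ⟨m, hm, fun i => c • e i, e', fun i => smul_ne_zero hc (he i), he', ?_, ?_⟩
  · rw [hw, Finset.smul_sum]
    exact Finset.sum_congr rfl fun i _ => by rw [TensorProduct.smul_tmul']
  · exact congrArg _ (funext fun i => by rw [hv.1 c (e i) hc (he i)])

theorem tensorVals_smul (hv : IsPrevaluation k v) {c : k} (hc : c ≠ 0)
    (w : E ⊗[k] E') : tensorVals k v v' (c • w) = tensorVals k v v' w := by
  refine le_antisymm ?_ (tensorVals_smul_subset v v' hv hc w)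
  have := tensorVals_smul_subset v v' hv (inv_ne_zero hc) (c • w)
  rwa [inv_smul_smul₀ hc] at this

theorem tensorVals_add {w₁ w₂ : E ⊗[k] E'} {q₁ q₂ : ℚ}
    (h₁ : q₁ ∈ tensorVals k v v' w₁) (h₂ : q₂ ∈ tensorVals k v v' w₂) :
    min q₁ q₂ ∈ tensorVals k v v' (w₁ + w₂) := by
  obtain ⟨m, hm, e, e', he, he', hw, rfl⟩ := h₁
  obtain ⟨m', hm', f, f', hf, hf', hw', rfl⟩ := h₂
  refine ⟨m + m', Nat.add_pos_left hm m', Fin.append e f, Fin.append e' f',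
    fun i => ?_, fun i => ?_, ?_, ?_⟩
  · refine Fin.addCases (fun j => ?_) (fun j => ?_) i
    · rw [Fin.append_left]; exact he j
    · rw [Fin.append_right]; exact hf j
  · refine Fin.addCases (fun j => ?_) (fun j => ?_) i
    · rw [Fin.append_left]; exact he' j
    · rw [Fin.append_right]; exact hf' j
  · rw [hw, hw', Fin.sum_univ_add]
    congr 1
    · exact Finset.sum_congr rfl fun j _ => by rw [Fin.append_left, Fin.append_left]
    · exact Finset.sum_congr rfl fun j _ => by rw [Fin.append_right, Fin.append_right]
  · refine le_antisymm (Finset.le_inf' _ _ fun i _ => ?_) (le_min ?_ ?_)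
    · refine Fin.addCases (fun j => ?_) (fun j => ?_) i
      · rw [Fin.append_left, Fin.append_left]
        exact le_trans (min_le_left _ _) (Finset.inf'_le _ (Finset.mem_univ j))
      · rw [Fin.append_right, Fin.append_right]
        exact le_trans (min_le_right _ _) (Finset.inf'_le _ (Finset.mem_univ j))
    · refine Finset.le_inf' _ _ fun j _ => ?_
      have := Finset.inf'_le (b := Fin.castAdd m' j)
        (fun i => v (Fin.append e f i) + v' (Fin.append e' f' i)) (Finset.mem_univ _)
      rwa [Fin.append_left, Fin.append_left] at this
    · refine Finset.le_inf' _ _ fun j _ => ?_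
      have := Finset.inf'_le (b := Fin.natAdd m j)
        (fun i => v (Fin.append e f i) + v' (Fin.append e' f' i)) (Finset.mem_univ _)
      rwa [Fin.append_right, Fin.append_right] at this

end aux

/-- For prevaluations `v, v'` on finite-dimensional `E, E'`, and any nonzero
`w ∈ E ⊗ E'`, the set `tensorVals k v v' w` has a maximum, and the resulting
function `v ⊗ v'` is a prevaluation on `E ⊗ E'`. -/
theorem stmt4 {k E E' : Type*} [Field k] [AddCommGroup E] [Module k E]
    [AddCommGroup E'] [Module k E'] [FiniteDimensional k E] [FiniteDimensional k E']
    (v : E → ℚ) (v' : E' → ℚ) (hv : IsPrevaluation k v) (hv' : IsPrevaluation k v') :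
    ∃ T : E ⊗[k] E' → ℚ,
      (∀ w : E ⊗[k] E', w ≠ 0 → IsGreatest (tensorVals k v v' w) (T w)) ∧
      IsPrevaluation k T := by
  have key : ∀ w : E ⊗[k] E', ∃ q : ℚ, w ≠ 0 → IsGreatest (tensorVals k v v' w) q := by
    intro w
    by_cases hw : w = 0
    · exact ⟨0, fun h => absurd hw h⟩
    · obtain ⟨b, hb, hub⟩ := Set.exists_max_image (tensorVals k v v' w) id
        (tensorVals_finite v v' hv hv' w) (tensorVals_nonempty v v' w hw)
      exact ⟨b, fun _ => ⟨hb, fun a ha => hub a ha⟩⟩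
  choose T hT using key
  refine ⟨T, fun w hw => hT w hw, ?_, ?_⟩
  · intro c w hc hw
    have hcw : c • w ≠ 0 := smul_ne_zero hc hw
    have h1 := hT _ hcw
    rw [tensorVals_smul v v' hv hc w] at h1
    exact h1.unique (hT w hw)
  · intro w₁ w₂ h₁ h₂ h₁₂
    exact (hT _ h₁₂).2 (tensorVals_add v v' ((hT w₁ h₁).1) ((hT w₂ h₂).1))
end

section
/- Let E be a finite-dimensional vector space over a field k, let v be a prevaluation on E, and let L = {L₁,…,L_r} be a frame in E. Then the following are equivalent: (i) every subspace F_{v≥a} = {e ∈ E : v(e) ≥ a} ∪ {0}, a ∈ ℚ, is the sum of some subset of the subspaces L₁,…,L_r; (ii) for every nonzero e ∈ E with decomposition e = Σ_i e_i, e_i ∈ L_i, one has v(e) = min{ v(e_i) : e_i ≠ 0 }. -/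
/-- A frame in `E`: a finite collection of one-dimensional subspaces whose
(internal) direct sum is `E`. -/
def IsFrame {k E : Type*} [Field k] [AddCommGroup E] [Module k E]
    {ι : Type*} [Fintype ι] [DecidableEq ι] (L : ι → Submodule k E) : Prop :=
  (∀ i, Module.finrank k (L i) = 1) ∧ DirectSum.IsInternal L

open Finset Module

namespace Submodule

variable {R M ι : Type*} [Semiring R] [AddCommMonoid M] [Module R M]

theorem finsetSum_eq_biSup (L : ι → Submodule R M) (s : Finset ι) :
    ∑ i ∈ s, L i = ⨆ i ∈ s, L i := by
  classical
  induction s using Finset.induction_on with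
  | empty => simp
  | insert a s ha ih => rw [sum_insert ha, ih, add_eq_sup, Finset.iSup_insert]

theorem mem_finsetSum_iff_exists_eq_sum [Fintype ι] (L : ι → Submodule R M) (s : Finset ι)
    (e : M) :
    e ∈ ∑ i ∈ s, L i ↔ ∃ c : ι → M, (∀ i, c i ∈ L i) ∧ (∀ i ∉ s, c i = 0) ∧ ∑ i, c i = e := by
  classical
  rw [finsetSum_eq_biSup, mem_iSup_finset_iff_exists_sum]
  constructor
  · rintro ⟨μ, rfl⟩
    refine ⟨fun i => if i ∈ s then (μ i : M) else 0, fun i => ?_, fun i hi => if_neg hi, ?_⟩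
    · dsimp only
      split_ifs
      exacts [(μ i).2, (L i).zero_mem]
    · rw [sum_ite_mem, univ_inter]
  · rintro ⟨c, hc, hcs, rfl⟩
    exact ⟨fun i => ⟨c i, hc i⟩, sum_subset (subset_univ s) fun i _ hi => hcs i hi⟩

end Submodule

namespace DirectSum.IsInternal

variable {R M ι : Type*} [Ring R] [AddCommGroup M] [Module R M] [DecidableEq ι] [Fintype ι]
  {L : ι → Submodule R M}

theorem eq_of_sum_eq (h : IsInternal L) {c d : ι → M} (hc : ∀ i, c i ∈ L i)
    (hd : ∀ i, d i ∈ L i) (hcd : ∑ i, c i = ∑ i, d i) : c = d :=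
  funext fun i => (iSupIndep_iff_finsetSum_eq_imp_eq L).1 h.submodule_iSupIndep univ c d
    (fun i _ => ⟨hc i, hd i⟩) hcd i (mem_univ i)

theorem exists_eq_sum (h : IsInternal L) (e : M) :
    ∃ c : ι → M, (∀ i, c i ∈ L i) ∧ ∑ i, c i = e := by
  have he : e ∈ ∑ i ∈ univ, L i := by
    rw [Submodule.finsetSum_eq_biSup]
    simp only [mem_univ, iSup_pos, h.submodule_iSup_eq_top, Submodule.mem_top]
  obtain ⟨c, hc, -, rfl⟩ := (Submodule.mem_finsetSum_iff_exists_eq_sum L univ e).1 he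
  exact ⟨c, hc, rfl⟩

theorem sum_mem_finsetSum_iff (h : IsInternal L) (s : Finset ι) {c : ι → M}
    (hc : ∀ i, c i ∈ L i) :
    ∑ i, c i ∈ ∑ i ∈ s, L i ↔ ∀ i ∉ s, c i = 0 := by
  rw [Submodule.mem_finsetSum_iff_exists_eq_sum]
  constructor
  · rintro ⟨d, hd, hds, hdc⟩
    rw [h.eq_of_sum_eq hc hd hdc.symm]
    exact hds
  · exact fun hcs => ⟨c, hc, hcs, rfl⟩

end DirectSum.IsInternal

theorem IsPrevaluation.apply_eq_of_finrank_eq_one {k E : Type*} [Field k] [AddCommGroup E]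
    [Module k E] {v : E → ℚ} (hv : IsPrevaluation k v) {S : Submodule k E}
    (hS : finrank k S = 1) {x y : E} (hx : x ∈ S) (hx0 : x ≠ 0) (hy : y ∈ S) (hy0 : y ≠ 0) :
    v y = v x := by
  rw [eq_span_singleton_of_mem_of_finrank_eq_one hS hx hx0] at hy
  obtain ⟨c, rfl⟩ := Submodule.mem_span_singleton.1 hy
  exact hv.1 c x (by rintro rfl; simp at hy0) hx0

section Adapted

variable {R M ι α : Type*} [Ring R] [AddCommGroup M] [Module R M] [DecidableEq ι] [Fintype ι]
  [LinearOrder α] {L : ι → Submodule R M}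

theorem apply_sum_le_of_superlevel_eq_finsetSum (hI : DirectSum.IsInternal L) (v : M → α)
    (hF : ∀ a : α, ∃ s : Finset ι, {e : M | e = 0 ∨ a ≤ v e} = ↑(∑ i ∈ s, L i))
    {c : ι → M} (hc : ∀ i, c i ∈ L i) {i : ι} (hi : c i ≠ 0) :
    v (∑ j, c j) ≤ v (c i) := by
  obtain ⟨s, hs⟩ := hF (v (∑ j, c j))
  have hsum : ∑ j, c j ∈ ∑ j ∈ s, L j := by
    rw [← SetLike.mem_coe, ← hs]
    exact Or.inr le_rfl
  have his : i ∈ s := by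
    by_contra his
    exact hi ((hI.sum_mem_finsetSum_iff s hc).1 hsum i his)
  have hci : c i ∈ ∑ j ∈ s, L j := single_le_sum (f := L) (fun _ _ => zero_le) his (hc i)
  rw [← SetLike.mem_coe, ← hs] at hci
  exact hci.resolve_left hi

theorem isLeast_of_superlevel_eq_finsetSum (hI : DirectSum.IsInternal L) (v : M → α)
    (hF : ∀ a : α, ∃ s : Finset ι, {e : M | e = 0 ∨ a ≤ v e} = ↑(∑ i ∈ s, L i))
    {c : ι → M} (hc : ∀ i, c i ∈ L i) (he : ∑ i, c i ≠ 0) :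
    IsLeast {q : α | ∃ i, c i ≠ 0 ∧ q = v (c i)} (v (∑ i, c i)) := by
  classical
  have hne : (univ.filter fun i => c i ≠ 0).Nonempty := by
    obtain ⟨i, -, hi⟩ := exists_ne_zero_of_sum_ne_zero he
    exact ⟨i, mem_filter.2 ⟨mem_univ i, hi⟩⟩
  obtain ⟨i₀, hi₀, hmin⟩ := exists_min_image _ (fun i => v (c i)) hne
  rw [mem_filter] at hi₀
  obtain ⟨s, hs⟩ := hF (v (c i₀))
  have hsum : ∑ j, c j ∈ ({e : M | e = 0 ∨ v (c i₀) ≤ v e} : Set M) := by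
    rw [hs]
    refine Submodule.sum_mem _ fun i _ => ?_
    rw [← SetLike.mem_coe, ← hs]
    by_cases hi : c i = 0
    exacts [Or.inl hi, Or.inr (hmin i (mem_filter.2 ⟨mem_univ i, hi⟩))]
  have le_of_ne_zero := fun i => apply_sum_le_of_superlevel_eq_finsetSum hI v hF hc (i := i)
  exact ⟨⟨i₀, hi₀.2, le_antisymm (le_of_ne_zero i₀ hi₀.2) (hsum.resolve_left he)⟩,
    fun q ⟨i, hi, hq⟩ => hq ▸ le_of_ne_zero i hi⟩

end Adapted

theorem exists_superlevel_eq_finsetSum {k E ι : Type*} [Field k] [AddCommGroup E] [Module k E]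
    [DecidableEq ι] [Fintype ι] {v : E → ℚ} (hv : IsPrevaluation k v) {L : ι → Submodule k E}
    (hL : IsFrame L)
    (hmin : ∀ c : ι → E, (∀ i, c i ∈ L i) → ∑ i, c i ≠ 0 →
      IsLeast {q : ℚ | ∃ i, c i ≠ 0 ∧ q = v (c i)} (v (∑ i, c i)))
    (a : ℚ) : ∃ s : Finset ι, {e : E | e = 0 ∨ a ≤ v e} = ↑(∑ i ∈ s, L i) := by
  obtain ⟨hfin, hI⟩ := hL
  choose x hxL hx0 using fun i =>
    (L i).ne_bot_iff.1 <| Submodule.nontrivial_iff_ne_bot.1 <|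
      Module.nontrivial_of_finrank_pos (R := k) (hfin i ▸ one_pos)
  classical
  refine ⟨univ.filter fun i => a ≤ v (x i), Set.ext fun e => ?_⟩
  obtain ⟨c, hc, rfl⟩ := hI.exists_eq_sum e
  rw [SetLike.mem_coe, hI.sum_mem_finsetSum_iff _ hc, Set.mem_ofPred_eq]
  simp only [mem_filter, mem_univ, true_and]
  rw [forall_congr' fun i => not_imp_comm]
  by_cases he : ∑ i, c i = 0
  · have hc0 : c = 0 := hI.eq_of_sum_eq hc (fun i => (L i).zero_mem) (by simpa using he)
    simp [hc0]
  · rw [or_iff_right he, le_isGLB_iff (hmin c hc he).isGLB, mem_lowerBounds]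
    refine ⟨fun ha i hi => ?_, fun ha q ⟨i, hi, hq⟩ => ?_⟩
    · rw [← hv.apply_eq_of_finrank_eq_one (hfin i) (hxL i) (hx0 i) (hc i) hi]
      exact ha _ ⟨i, hi, rfl⟩
    · rw [hq, hv.apply_eq_of_finrank_eq_one (hfin i) (hxL i) (hx0 i) (hc i) hi]
      exact ha i hi

theorem stmt7_general {k E : Type*} [Field k] [AddCommGroup E] [Module k E]
    {r : ℕ} (v : E → ℚ) (hv : IsPrevaluation k v)
    (L : Fin r → Submodule k E) (hL : IsFrame L) :
    (∀ a : ℚ, ∃ s : Finset (Fin r),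
        {e : E | e = 0 ∨ a ≤ v e} = ↑(∑ i ∈ s, L i)) ↔
    (∀ e : E, e ≠ 0 → ∀ c : Fin r → E, (∀ i, c i ∈ L i) → e = ∑ i, c i →
        IsLeast {q : ℚ | ∃ i, c i ≠ 0 ∧ q = v (c i)} (v e)) := by
  constructor
  · rintro hF e he c hc rfl
    exact isLeast_of_superlevel_eq_finsetSum hL.2 v hF hc he
  · exact fun hmin => exists_superlevel_eq_finsetSum hv hL fun c hc he => hmin _ he c hc rfl

/-- A frame `L` is adapted to a prevaluation `v` (i): every subspace
`F_{v ≥ a}` is a sum of some subset of the members of `L`) if and only if (ii):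
for every nonzero `e` with decomposition `e = ∑ i, c i`, `c i ∈ L i`, the value
`v e` is the minimum of the `v (c i)` over the nonzero components `c i`. -/
theorem stmt7 {k E : Type*} [Field k] [AddCommGroup E] [Module k E] [FiniteDimensional k E]
    {r : ℕ} (v : E → ℚ) (hv : IsPrevaluation k v)
    (L : Fin r → Submodule k E) (hL : IsFrame L) :
    (∀ a : ℚ, ∃ s : Finset (Fin r),
        {e : E | e = 0 ∨ a ≤ v e} = ↑(∑ i ∈ s, L i)) ↔
    (∀ e : E, e ≠ 0 → ∀ c : Fin r → E, (∀ i, c i ∈ L i) → e = ∑ i, c i →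
        IsLeast {q : ℚ | ∃ i, c i ≠ 0 ∧ q = v (c i)} (v e)) :=
  stmt7_general v hv L hL
end

section
/- Let E be a finite-dimensional vector space over a field k, let v be a prevaluation on E, and let L = {L₁,…,L_r} be a frame adapted to v. Then v is constant on L_i \ {0} for each i, and for every c ∈ ℚ the number of indices i with v(L_i \ {0}) = {c} equals dim F_{v≥c} − dim F_{v>c}, where F_{v≥c} = {e ∈ E : v(e) ≥ c} ∪ {0} and F_{v>c} = {e ∈ E : v(e) > c} ∪ {0}. -/
/-- A frame `L` is adapted to `v` if every subspace `F_{v ≥ a}` is the sum of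
some subset of the members of `L`. -/
def AdaptedFrame {k E : Type*} [Field k] [AddCommGroup E] [Module k E]
    {ι : Type*} (v : E → ℚ) (L : ι → Submodule k E) : Prop :=
  ∀ a : ℚ, ∃ s : Finset ι, {e : E | e = 0 ∨ a ≤ v e} = ↑(∑ i ∈ s, L i)

/-!
Each line `Lᵢ` is spanned by any of its nonzero vectors, so scale invariance makes `v` constant
on `Lᵢ \ {0}`, with value `wᵢ` say. If `F` is one of `F_{v ≥ c}`, `F_{v > c}`, then every nonzero
`e ∈ F` lies in `F_{v ≥ v(e)} ⊆ F`, which by adaptedness is a sum of lines; hence `F` is the sum of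
the lines it contains, i.e. of the `Lᵢ` with `c ≤ wᵢ`, resp. `c < wᵢ`. Since the lines are
independent, `dim F` counts these indices, and the difference of the two counts is `#{i | wᵢ = c}`.
-/

open Module

section Lines

variable {k E : Type*} [Field k] [AddCommGroup E] [Module k E]

theorem eq_of_mem_of_finrank_eq_one {α : Type*} {v : E → α}
    (hv : ∀ (c : k) (e : E), c ≠ 0 → e ≠ 0 → v (c • e) = v e)
    {p : Submodule k E} (hp : finrank k p = 1) {e e' : E} (he : e ∈ p) (he' : e' ∈ p)
    (he0 : e ≠ 0) (he0' : e' ≠ 0) : v e = v e' := by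
  obtain ⟨c, hc⟩ := (finrank_eq_one_iff_of_nonzero' (⟨e, he⟩ : p) (by simpa using he0)).mp hp
    ⟨e', he'⟩
  have hce : c • e = e' := congrArg Subtype.val hc
  have hc0 : c ≠ 0 := by
    rintro rfl
    exact he0' (by simpa using hce.symm)
  rw [← hce, hv c e hc0 he0]

theorem le_iff_of_finrank_eq_one {α : Type*} {v : E → α}
    (hv : ∀ (c : k) (e : E), c ≠ 0 → e ≠ 0 → v (c • e) = v e)
    {P : α → Prop} {F p : Submodule k E} (hF : (F : Set E) = {e | e = 0 ∨ P (v e)})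
    (hp : finrank k p = 1) {g : E} (hg : g ∈ p) (hg0 : g ≠ 0) : p ≤ F ↔ P (v g) := by
  constructor
  · intro hpF
    have hgF : g ∈ (F : Set E) := hpF hg
    rw [hF] at hgF
    exact hgF.resolve_left hg0
  · intro hPg e he
    change e ∈ (F : Set E)
    rw [hF]
    by_cases he0 : e = 0
    · exact Or.inl he0
    · exact Or.inr (eq_of_mem_of_finrank_eq_one hv hp hg he hg0 he0 ▸ hPg)

theorem iSupIndep.finrank_biSup [FiniteDimensional k E] {ι : Type*} {L : ι → Submodule k E}
    (hL : iSupIndep L) (t : Finset ι) :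
    finrank k ↥(⨆ i ∈ t, L i) = ∑ i ∈ t, finrank k (L i) := by
  classical
  induction t using Finset.induction_on with
  | empty => simp
  | insert j t hj ih =>
    have hdisj : Disjoint (L j) (⨆ i ∈ t, L i) := hL.disjoint_biSup (y := (t : Set ι)) hj
    have hsup := Submodule.finrank_sup_add_finrank_inf_eq (L j) (⨆ i ∈ t, L i)
    rw [hdisj.eq_bot, finrank_bot, add_zero, ih] at hsup
    rw [Finset.iSup_insert, hsup, Finset.sum_insert hj]

end Lines

section Adapted

variable {k E ι : Type*} [Field k] [AddCommGroup E] [Module k E]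

/-- Monotone `P` covers `F_{v > c}` as well as `F_{v ≥ c}`; only the latter is given directly by
`AdaptedFrame`. -/
theorem AdaptedFrame.eq_iSup_le {v : E → ℚ} {L : ι → Submodule k E} (hvL : AdaptedFrame v L)
    {P : ℚ → Prop} (hP : Monotone P) {F : Submodule k E}
    (hF : (F : Set E) = {e | e = 0 ∨ P (v e)}) : F = ⨆ (i) (_ : L i ≤ F), L i := by
  refine le_antisymm (fun e he => ?_) (iSup₂_le fun _ h => h)
  have he' : e ∈ (F : Set E) := he
  rw [hF] at he'
  rcases he' with rfl | hPe
  · exact zero_mem _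
  obtain ⟨s, hs⟩ := hvL (v e)
  have hsF : ∑ i ∈ s, L i ≤ F := fun x hx => by
    have hx' : x ∈ {e' : E | e' = 0 ∨ v e ≤ v e'} := hs ▸ hx
    change x ∈ (F : Set E)
    rw [hF]
    exact hx'.imp_right fun hle => hP hle hPe
  have hes : e ∈ ∑ i ∈ s, L i := by
    have : e ∈ {e' : E | e' = 0 ∨ v e ≤ v e'} := Or.inr le_rfl
    rwa [hs] at this
  refine Finset.sum_induction _ (· ≤ ⨆ (i) (_ : L i ≤ F), L i) (fun _ _ => sup_le) bot_le
    (fun i hi => ?_) hes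
  exact le_iSup₂ (f := fun i (_ : L i ≤ F) => L i) i
    ((Finset.single_le_sum (f := L) (fun _ _ => zero_le) hi).trans hsF)

theorem IsFrame.finrank_eq_ncard [FiniteDimensional k E] [Fintype ι] [DecidableEq ι]
    {v : E → ℚ} {L : ι → Submodule k E} (hL : IsFrame L) (hvL : AdaptedFrame v L)
    {P : ℚ → Prop} (hP : Monotone P) {F : Submodule k E}
    (hF : (F : Set E) = {e | e = 0 ∨ P (v e)}) : finrank k F = {i | L i ≤ F}.ncard := by
  classical
  have hF' : F = ⨆ i ∈ Finset.univ.filter (L · ≤ F), L i := by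
    simpa only [Finset.mem_filter, Finset.mem_univ, true_and] using hvL.eq_iSup_le hP hF
  rw [← Finset.coe_filter_univ, Set.ncard_coe_finset]
  calc finrank k F = finrank k ↥(⨆ i ∈ Finset.univ.filter (L · ≤ F), L i) := by rw [← hF']
    _ = _ := by simp [hL.2.submodule_iSupIndep.finrank_biSup, hL.1]

end Adapted

/-- If the frame `L` is adapted to the prevaluation `v`, then `v` is constant on
each `Lᵢ \ {0}`, and for each `c ∈ ℚ` the number of indices `i` with
`v(Lᵢ \ {0}) = {c}` equals `dim F_{v ≥ c} - dim F_{v > c}`. -/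
theorem stmt9 {k E : Type*} [Field k] [AddCommGroup E] [Module k E] [FiniteDimensional k E]
    {r : ℕ} (v : E → ℚ) (hv : IsPrevaluation k v)
    (L : Fin r → Submodule k E) (hL : IsFrame L) (hvL : AdaptedFrame v L) :
    (∀ i, ∀ e ∈ L i, ∀ e' ∈ L i, e ≠ 0 → e' ≠ 0 → v e = v e') ∧
    (∀ (c : ℚ) (Fge Fgt : Submodule k E),
        (Fge : Set E) = {e : E | e = 0 ∨ c ≤ v e} →
        (Fgt : Set E) = {e : E | e = 0 ∨ c < v e} →
        {i : Fin r | ∀ e ∈ L i, e ≠ 0 → v e = c}.ncard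
          = Module.finrank k Fge - Module.finrank k Fgt) := by
  have hconst : ∀ i, ∀ e ∈ L i, ∀ e' ∈ L i, e ≠ 0 → e' ≠ 0 → v e = v e' :=
    fun i _ he _ he' => eq_of_mem_of_finrank_eq_one hv.1 (hL.1 i) he he'
  refine ⟨hconst, fun c Fge Fgt hge hgt => ?_⟩
  have hgen i : ∃ g ∈ L i, g ≠ 0 :=
    Submodule.exists_mem_ne_zero_of_ne_bot fun h =>
      one_ne_zero ((hL.1 i).symm.trans (Submodule.finrank_eq_zero.mpr h))
  choose g hgL hg0 using hgen
  have hfinrank {P : ℚ → Prop} (hP : Monotone P) {F : Submodule k E}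
      (hF : (F : Set E) = {e | e = 0 ∨ P (v e)}) : finrank k F = {i | P (v (g i))}.ncard := by
    simp only [hL.finrank_eq_ncard hvL hP hF,
      le_iff_of_finrank_eq_one hv.1 hF (hL.1 _) (hgL _) (hg0 _)]
  have hlevel : {i | ∀ e ∈ L i, e ≠ 0 → v e = c} = {i | c ≤ v (g i)} \ {i | c < v (g i)} := by
    ext i
    simp only [Set.mem_ofPred_eq, Set.mem_sdiff, not_lt]
    refine ⟨fun h => (h _ (hgL i) (hg0 i)).symm ▸ ⟨le_rfl, le_rfl⟩, fun h e he he0 => ?_⟩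
    rw [hconst i e he (g i) (hgL i) he0 (hg0 i)]
    exact le_antisymm h.2 h.1
  rw [hfinrank (fun _ _ hab h => h.trans hab) hge, hfinrank (fun _ _ hab h => h.trans_le hab) hgt,
    hlevel, Set.ncard_sdiff (Set.ofPred_subset_ofPred.mpr fun _ => le_of_lt)]
end

section
/- Let E be a finite-dimensional vector space over a field k and let v be a prevaluation on E. If L = {L₁,…,L_r} and L' = {L'₁,…,L'_r} are two frames in E both adapted to v, then the multiset of values {v(L₁),…,v(L_r)} equals the multiset {v(L'₁),…,v(L'_r)} (where v(L_i) denotes the common value of v on L_i \ {0}). In particular, for every i, the i-th elementary symmetric polynomial evaluated at (v(L₁),…,v(L_r)) equals its value at (v(L'₁),…,v(L'_r)), so the elementary symmetric functions ε_i(v) are well-defined independently of the adapted frame. -/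
/-- Two multisets of rationals with the same number of elements `≥ a` for every `a` coincide. -/
lemma multiset_eq_of_countP_ge (m m' : Multiset ℚ)
    (h : ∀ a : ℚ, m.countP (a ≤ ·) = m'.countP (a ≤ ·)) : m = m' := by
  classical
  ext b
  -- countP (b ≤ ·) = countP (b < ·) + count b
  have hdec : ∀ t : Multiset ℚ, t.countP (b ≤ ·) = t.countP (b < ·) + t.count b := by
    intro t
    have hf := Multiset.filter_add_filter (p := (b < ·)) (q := (· = b)) t
    have h1 : Multiset.filter (fun a => b < a ∨ a = b) t = Multiset.filter (b ≤ ·) t := by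
      apply Multiset.filter_congr
      intro x _
      constructor
      · rintro (hx | rfl) <;> simp [le_of_lt, *]
      · intro hx
        rcases lt_or_eq_of_le hx with h' | h'
        · exact Or.inl h'
        · exact Or.inr h'.symm
    have h2 : Multiset.filter (fun a => b < a ∧ a = b) t = 0 := by
      rw [Multiset.filter_eq_nil]
      rintro x hx ⟨h1', rfl⟩
      exact lt_irrefl _ h1'
    have := congrArg Multiset.card hf
    rw [Multiset.card_add, Multiset.card_add, h1, h2] at this
    simp only [Multiset.card_zero, add_zero] at this
    rw [← Multiset.countP_eq_card_filter, ← Multiset.countP_eq_card_filter,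
      ← Multiset.countP_eq_card_filter] at this
    rw [← this]
    congr 1
    rw [Multiset.count]
    exact Multiset.countP_congr rfl (fun x _ => by simp [eq_comm])
  -- countP (b < ·) agree on m and m'
  have hlt : m.countP (b < ·) = m'.countP (b < ·) := by
    set T : Finset ℚ := (m + m').toFinset.filter (fun x => b < x) with hT
    by_cases hTne : T.Nonempty
    · set c := T.min' hTne with hc
      have hbc : b < c := (Finset.mem_filter.mp (T.min'_mem hTne)).2
      have hiff : ∀ x ∈ m + m', (b < x) = (c ≤ x) := by
        intro x hx
        simp only [eq_iff_iff]
        constructor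
        · intro h'
          exact T.min'_le x (Finset.mem_filter.mpr ⟨Multiset.mem_toFinset.mpr hx, h'⟩)
        · intro h'
          exact lt_of_lt_of_le hbc h'
      have e1 : m.countP (b < ·) = m.countP (c ≤ ·) :=
        Multiset.countP_congr rfl (fun x hx => hiff x (Multiset.mem_add.mpr (Or.inl hx)))
      have e2 : m'.countP (b < ·) = m'.countP (c ≤ ·) :=
        Multiset.countP_congr rfl (fun x hx => hiff x (Multiset.mem_add.mpr (Or.inr hx)))
      rw [e1, e2, h c]
    · have hnone : ∀ x ∈ m + m', ¬ b < x := by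
        intro x hx hbx
        exact hTne ⟨x, Finset.mem_filter.mpr ⟨Multiset.mem_toFinset.mpr hx, hbx⟩⟩
      rw [Multiset.countP_eq_zero.mpr (fun x hx => hnone x (Multiset.mem_add.mpr (Or.inl hx))),
        Multiset.countP_eq_zero.mpr (fun x hx => hnone x (Multiset.mem_add.mpr (Or.inr hx)))]
  have h1 := hdec m
  have h2 := hdec m'
  rw [h b, h2, hlt] at h1
  exact (Nat.add_left_cancel h1.symm)

/-- For an adapted frame, the finrank of the submodule `∑ i ∈ s, L i` realizing
`F_{v ≥ a}` equals the number of indices with `a ≤ w i`. -/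
lemma frame_filter_card {k E : Type*} [Field k] [AddCommGroup E] [Module k E]
    [FiniteDimensional k E] {r : ℕ} (v : E → ℚ) (L : Fin r → Submodule k E)
    (hL : IsFrame L) (w : Fin r → ℚ)
    (hw : ∀ i, ∀ e ∈ L i, e ≠ 0 → v e = w i) (a : ℚ) (s : Finset (Fin r))
    (hs : {e : E | e = 0 ∨ a ≤ v e} = ↑(∑ i ∈ s, L i)) :
    Module.finrank k (∑ i ∈ s, L i : Submodule k E) =
      (Finset.univ.filter (fun i => a ≤ w i)).card := by
  classical
  have hsum : ∀ t : Finset (Fin r), (∑ i ∈ t, L i) = t.sup L := by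
    intro t
    induction t using Finset.cons_induction with
    | empty => simp
    | cons i t hi ih => rw [Finset.sum_cons, Finset.sup_cons, ih, Submodule.add_eq_sup]
  -- spanning vectors
  have hex : ∀ i, ∃ e : E, e ∈ L i ∧ e ≠ 0 ∧ L i = Submodule.span k {e} := by
    intro i
    have h1 := hL.1 i
    have : Nontrivial (L i) := Module.finrank_pos_iff.mp (by rw [h1]; norm_num)
    obtain ⟨x, hx⟩ := exists_ne (0 : L i)
    refine ⟨x, x.2, ?_, ?_⟩
    · exact fun h => hx (Subtype.ext h)
    · have hle : Submodule.span k {(x : E)} ≤ L i := by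
        rw [Submodule.span_singleton_le_iff_mem]; exact x.2
      refine (Submodule.eq_of_le_of_finrank_le hle ?_).symm
      rw [h1, finrank_span_singleton (fun h => hx (Subtype.ext h))]
  choose e hmem hne hspan using hex
  have hind := hL.2.submodule_iSupIndep
  -- s characterization
  have hchar : ∀ i, i ∈ s ↔ a ≤ w i := by
    intro i
    constructor
    · intro hi
      have hle : L i ≤ ∑ j ∈ s, L j := by
        rw [hsum]; exact Finset.le_sup hi
      have hmem' : e i ∈ ((∑ j ∈ s, L j : Submodule k E) : Set E) := hle (hmem i)
      rw [← hs] at hmem'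
      rcases hmem' with h0 | hle'
      · exact absurd h0 (hne i)
      · rwa [hw i (e i) (hmem i) (hne i)] at hle'
    · intro hwi
      by_contra hi
      have hle : L i ≤ ∑ j ∈ s, L j := by
        intro x hx
        have hx' : x ∈ {e : E | e = 0 ∨ a ≤ v e} := by
          by_cases hx0 : x = 0
          · exact Or.inl hx0
          · exact Or.inr (by rw [hw i x hx hx0]; exact hwi)
        rw [hs] at hx'
        exact hx'
      have hle2 : L i ≤ ⨆ j, ⨆ _ : j ≠ i, L j := by
        refine hle.trans ?_
        rw [hsum]
        refine Finset.sup_le fun j hj => ?_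
        have hji : j ≠ i := fun h => hi (h ▸ hj)
        exact le_iSup₂ (f := fun j (_ : j ≠ i) => L j) j hji
      have hbot : L i = ⊥ := ((hind i).mono_right (by simpa using hle2.trans le_rfl)).eq_bot_of_le hle2
      have := hL.1 i
      rw [hbot, finrank_bot] at this
      exact absurd this (by norm_num)
  have hset : s = Finset.univ.filter (fun i => a ≤ w i) := by
    ext i; simpa using hchar i
  -- finrank computation
  have hspan' : (∑ i ∈ s, L i) =
      Submodule.span k (Set.range (fun j : {x // x ∈ s} => e j)) := by
    rw [hsum]
    apply le_antisymm
    · refine Finset.sup_le fun j hj => ?_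
      rw [hspan j]
      apply Submodule.span_mono
      exact Set.singleton_subset_iff.mpr ⟨⟨j, hj⟩, rfl⟩
    · rw [Submodule.span_le]
      rintro x ⟨⟨j, hj⟩, rfl⟩
      exact (Finset.le_sup hj : L j ≤ s.sup L) (hmem j)
  have hli : LinearIndependent k e := hind.linearIndependent L hmem hne
  rw [hspan']
  have hcard := finrank_span_eq_card (hli.comp ((↑) : {x // x ∈ s} → Fin r) Subtype.val_injective)
  simp only [Function.comp_def] at hcard
  rw [hcard, Fintype.card_coe, hset]

/-- If two frames `L`, `L'` are both adapted to the prevaluation `v`, then the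
multisets of values of `v` on the members of `L` and of `L'` coincide; in
particular all elementary symmetric functions of these values coincide, so the
elementary symmetric functions `εᵢ(v)` are well-defined. Here `w i` (resp.
`w' i`) denotes the common value of `v` on `L i \ {0}` (resp. `L' i \ {0}`). -/
theorem stmt10 {k E : Type*} [Field k] [AddCommGroup E] [Module k E] [FiniteDimensional k E]
    {r : ℕ} (v : E → ℚ) (hv : IsPrevaluation k v)
    (L L' : Fin r → Submodule k E) (hL : IsFrame L) (hL' : IsFrame L')
    (hvL : AdaptedFrame v L) (hvL' : AdaptedFrame v L')
    (w w' : Fin r → ℚ)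
    (hw : ∀ i, ∀ e ∈ L i, e ≠ 0 → v e = w i)
    (hw' : ∀ i, ∀ e ∈ L' i, e ≠ 0 → v e = w' i) :
    Finset.univ.val.map w = Finset.univ.val.map w' ∧
    ∀ n : ℕ, (Finset.univ.val.map w).esymm n = (Finset.univ.val.map w').esymm n := by
  classical
  have key : ∀ a : ℚ, (Finset.univ.val.map w).countP (a ≤ ·) =
      (Finset.univ.val.map w').countP (a ≤ ·) := by
    intro a
    obtain ⟨s, hs⟩ := hvL a
    obtain ⟨s', hs'⟩ := hvL' a
    have h1 := frame_filter_card v L hL w hw a s hs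
    have h2 := frame_filter_card v L' hL' w' hw' a s' hs'
    have heq : (∑ i ∈ s, L i) = (∑ i ∈ s', L' i) := SetLike.coe_injective (hs.symm.trans hs')
    rw [Multiset.countP_map, Multiset.countP_map]
    have hc : ∀ (u : Fin r → ℚ),
        Multiset.card (Finset.univ.val.filter fun i => a ≤ u i) =
        (Finset.univ.filter fun i => a ≤ u i).card := fun u => rfl
    rw [hc w, hc w', ← h1, ← h2, heq]
  have hm : Finset.univ.val.map w = Finset.univ.val.map w' :=
    multiset_eq_of_countP_ge _ _ key
  exact ⟨hm, fun n => by rw [hm]⟩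
end

section
/- Let E be a finite-dimensional vector space over a field k. For any two prevaluations v and v' on E there exists a frame L = {L₁,…,L_r} in E adapted simultaneously to both v and v'; that is, every subspace F_{v≥a} and every subspace F_{v'≥a}, a ∈ ℚ, is the sum of some subset of the L_i. (This is the statement, for GL(E), that any two points of the building lie in a common apartment.) -/
/-!
The subspaces `F_{v ≥ a}` form a chain, and a basis `s` with `span (s ∩ W) = W` for every member
`W` of two chains `C`, `D` of subspaces gives the common frame. Such a basis is built by induction
on `dim E`. Well-foundedness gives a least nonzero member of `C`; pick `e ≠ 0` in it, so `e` lies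
in every nonzero member of `C`. By induction the images of `C` and `D` in `E ⧸ k ∙ e` have a
common adapted basis. Lift each of its vectors into the least member of `D` whose image contains
it, and add `e`. A member of `C` contains `k ∙ e`, so it is the preimage of its image and any lift
lands in it; for a member `G` of `D` the lifts were chosen inside `G`, and `(k ∙ e) ⊓ G` is `0` or
spanned by `e`.
-/

open Module Submodule

universe u

theorem IsChain.exists_isLeast {α : Type*} [PartialOrder α] [WellFoundedLT α] {s : Set α}
    (hs : IsChain (· ≤ ·) s) (hne : s.Nonempty) : ∃ a, IsLeast s a := by
  obtain ⟨a, ha, hmin⟩ := wellFounded_lt.has_min s hne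
  refine ⟨a, ha, fun b hb ↦ ?_⟩
  rcases eq_or_ne a b with rfl | hne
  · exact le_rfl
  exact (hs.total ha hb).resolve_right fun hba ↦ hmin b hb (lt_of_le_of_ne hba hne.symm)

section Chains

variable {R M N : Type*} [Ring R] [AddCommGroup M] [Module R M] [AddCommGroup N] [Module R N]
  [WellFoundedLT (Submodule R M)]

theorem IsChain.exists_ne_zero_forall_mem [Nontrivial M] {C : Set (Submodule R M)}
    (hC : IsChain (· ≤ ·) C) : ∃ e : M, e ≠ 0 ∧ ∀ W ∈ C, W ≠ ⊥ → e ∈ W := by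
  have hC' : IsChain (· ≤ ·) (insert ⊤ C) := hC.insert fun _ _ _ ↦ Or.inr le_top
  obtain ⟨F, ⟨-, hF⟩, hFle⟩ := (hC'.mono (Set.sep_subset (insert ⊤ C) (· ≠ ⊥))).exists_isLeast
    ⟨⊤, Set.mem_insert _ _, top_ne_bot⟩
  obtain ⟨e, heF, he⟩ := exists_mem_ne_zero_of_ne_bot hF
  exact ⟨e, he, fun W hW hW0 ↦ hFle ⟨Set.mem_insert_of_mem _ hW, hW0⟩ heF⟩

theorem IsChain.exists_preimage_forall_mem {D : Set (Submodule R M)} (hD : IsChain (· ≤ ·) D)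
    {f : M →ₗ[R] N} (hf : Function.Surjective f) (y : N) :
    ∃ x, f x = y ∧ ∀ G ∈ D, y ∈ G.map f → x ∈ G := by
  by_cases hy : ∃ G ∈ D, y ∈ G.map f
  · obtain ⟨G₀, ⟨-, x, hxG₀, hx⟩, hG₀le⟩ := (hD.mono (Set.sep_subset _ _)).exists_isLeast hy
    exact ⟨x, hx, fun G hG hyG ↦ hG₀le ⟨hG, hyG⟩ hxG₀⟩
  · obtain ⟨x, hx⟩ := hf y
    exact ⟨x, hx, fun G hG hyG ↦ absurd ⟨G, hG, hyG⟩ hy⟩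

end Chains

theorem le_span_inter_of_le_map_mkQ {R M : Type*} [Ring R] [AddCommGroup M] [Module R M]
    {N V : Submodule R M} {s : Set M} {t : Set (M ⧸ N)}
    (ht : V.map N.mkQ ≤ span R (t ∩ V.map N.mkQ)) (hts : t ∩ V.map N.mkQ ⊆ N.mkQ '' (s ∩ V))
    (hN : N ⊓ V ≤ span R (s ∩ V)) : V ≤ span R (s ∩ V) := by
  have hspan : span R (s ∩ V) ≤ V := span_le.mpr Set.inter_subset_right
  have hmap : V.map N.mkQ ≤ (span R (s ∩ V)).map N.mkQ :=
    ht.trans (by rw [map_span]; exact span_mono hts)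
  calc V ≤ (span R (s ∩ V) ⊔ N) ⊓ V := by
        refine le_inf ?_ le_rfl
        rw [sup_comm, ← comap_map_mkQ]
        exact map_le_iff_le_comap.mp hmap
    _ = span R (s ∩ V) ⊔ N ⊓ V := sup_inf_assoc_of_le _ hspan
    _ ≤ span R (s ∩ V) := sup_le le_rfl hN

section DivisionRing

variable {K : Type*} [DivisionRing K]

theorem span_singleton_inf_le_span_insert_inter {V : Type*} [AddCommGroup V] [Module K V]
    (e : V) (s : Set V) (W : Submodule K V) : (K ∙ e) ⊓ W ≤ span K (insert e s ∩ W) := by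
  by_cases he : e ∈ W
  · exact inf_le_left.trans (span_mono (Set.singleton_subset_iff.mpr ⟨Set.mem_insert _ _, he⟩))
  · rw [inf_comm, disjoint_iff.mp (disjoint_span_singleton.mpr fun h ↦ absurd h he)]
    exact bot_le

theorem exists_linearIndepOn_span_inter_eq_of_quotient {V : Type*} [AddCommGroup V] [Module K V]
    [WellFoundedLT (Submodule K V)] {C D : Set (Submodule K V)} (hD : IsChain (· ≤ ·) D)
    {e : V} (he : e ≠ 0) (heC : ∀ W ∈ C, W ≠ ⊥ → e ∈ W) {t : Set (V ⧸ K ∙ e)}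
    (ht : LinearIndepOn K id t) (ht_span : span K t = ⊤)
    (ht_adapted : ∀ W ∈ C ∪ D, span K (t ∩ W.map (K ∙ e).mkQ) = W.map (K ∙ e).mkQ) :
    ∃ s : Set V, LinearIndepOn K id s ∧ span K s = ⊤ ∧ ∀ W ∈ C ∪ D, span K (s ∩ W) = W := by
  choose σ hσπ hσD using hD.exists_preimage_forall_mem (K ∙ e).mkQ_surjective
  set π := (K ∙ e).mkQ
  have adapted : ∀ W : Submodule K V, (∀ ξ ∈ t, ξ ∈ W.map π → σ ξ ∈ W) →
      span K (t ∩ W.map π) = W.map π → span K (insert e (σ '' t) ∩ W) = W :=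
    fun W hσW htW ↦ le_antisymm (span_le.mpr Set.inter_subset_right) <|
      le_span_inter_of_le_map_mkQ htW.ge
        (fun ξ ⟨hξt, hξW⟩ ↦ ⟨σ ξ, ⟨.inr ⟨ξ, hξt, rfl⟩, hσW ξ hξt hξW⟩, hσπ ξ⟩)
        (span_singleton_inf_le_span_insert_inter e _ W)
  refine ⟨insert e (σ '' t), ?_, ?_, ?_⟩
  · rw [Set.insert_eq]
    refine LinearIndepOn.union_id_of_quotient (M' := K ∙ e)
      (Set.singleton_subset_iff.mpr (mem_span_singleton_self e)) (.singleton he) ?_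
    exact .image_of_comp σ π (by rwa [show π ∘ σ = id from funext hσπ])
  · simpa using adapted ⊤ (fun _ _ _ ↦ mem_top)
      (by rw [Submodule.map_top, range_mkQ, top_coe, Set.inter_univ, ht_span])
  · rintro W (hWC | hWD)
    · rcases eq_or_ne W ⊥ with rfl | hW
      · exact le_antisymm (span_le.mpr Set.inter_subset_right) bot_le
      refine adapted W (fun ξ _ hξ ↦ ?_) (ht_adapted W (.inl hWC))
      have hσξ : σ ξ ∈ (W.map π).comap π := by simpa [hσπ] using hξ
      rwa [comap_map_mkQ, sup_eq_right.mpr ((span_singleton_le_iff_mem e W).mpr (heC W hWC hW))]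
        at hσξ
    · exact adapted W (fun ξ _ ↦ hσD ξ W hWD) (ht_adapted W (.inr hWD))

theorem exists_linearIndepOn_span_inter_eq_of_isChain {V : Type u} [AddCommGroup V] [Module K V]
    [FiniteDimensional K V] {C D : Set (Submodule K V)} (hC : IsChain (· ≤ ·) C)
    (hD : IsChain (· ≤ ·) D) :
    ∃ s : Set V, LinearIndepOn K id s ∧ span K s = ⊤ ∧ ∀ W ∈ C ∪ D, span K (s ∩ W) = W := by
  induction h : finrank K V using Nat.strong_induction_on generalizing V with
  | _ n ih =>
  rcases subsingleton_or_nontrivial V with hV | hV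
  · exact ⟨∅, linearIndepOn_empty _ _, Subsingleton.elim _ _, fun _ _ ↦ Subsingleton.elim _ _⟩
  obtain ⟨e, he, heC⟩ := hC.exists_ne_zero_forall_mem
  have hlt : finrank K (V ⧸ K ∙ e) < n := by
    have := (K ∙ e).finrank_quotient_add_finrank
    rw [finrank_span_singleton he] at this
    omega
  obtain ⟨t, ht, ht_span, ht_adapted⟩ := ih _ hlt (V := V ⧸ K ∙ e)
    (hC.image_of_map_rel (· ≤ ·) (· ≤ ·) (map (K ∙ e).mkQ) fun _ _ ↦ map_mono)
    (hD.image_of_map_rel (· ≤ ·) (· ≤ ·) (map (K ∙ e).mkQ) fun _ _ ↦ map_mono) rfl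
  exact exists_linearIndepOn_span_inter_eq_of_quotient hD he heC ht ht_span fun W hW ↦
    ht_adapted _ (hW.imp (Set.mem_image_of_mem _) (Set.mem_image_of_mem _))

theorem Submodule.sum_span_singleton {V ι : Type*} [AddCommGroup V] [Module K V]
    (t : Finset ι) (b : ι → V) : ∑ i ∈ t, K ∙ b i = span K (b '' t) := by
  -- addition of submodules is `⊔`, so the finite sum unfolds to `Finset.sup`
  change t.sup _ = _
  rw [Finset.sup_eq_iSup, Set.image_eq_iUnion, span_iUnion₂]
  rfl

end DivisionRing

section Prevaluation

variable {k E : Type*} [Field k] [AddCommGroup E] [Module k E] {v : E → ℚ}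

def IsPrevaluation.filtration (hv : IsPrevaluation k v) (a : ℚ) : Submodule k E where
  carrier := {e | e = 0 ∨ a ≤ v e}
  zero_mem' := .inl rfl
  add_mem' {e₁ e₂} h₁ h₂ := by
    rcases eq_or_ne e₁ 0 with rfl | he₁
    · simpa using h₂
    rcases eq_or_ne e₂ 0 with rfl | he₂
    · simpa using h₁
    rcases eq_or_ne (e₁ + e₂) 0 with hsum | hsum
    · exact .inl hsum
    exact .inr <| (le_min (h₁.resolve_left he₁) (h₂.resolve_left he₂)).trans
      (hv.2 e₁ e₂ he₁ he₂ hsum)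
  smul_mem' c e h := by
    rcases eq_or_ne c 0 with rfl | hc
    · simp
    rcases eq_or_ne e 0 with rfl | he
    · simp
    exact .inr <| (hv.1 c e hc he).symm ▸ h.resolve_left he

theorem IsPrevaluation.antitone_filtration (hv : IsPrevaluation k v) : Antitone hv.filtration :=
  fun _ _ hab _ he ↦ he.imp_right hab.trans

end Prevaluation

theorem exists_isFrame_of_linearIndepOn {k E : Type*} [Field k] [AddCommGroup E] [Module k E]
    [FiniteDimensional k E] {s : Set E} (hs : LinearIndepOn k id s) (hs_span : span k s = ⊤) :
    ∃ (r : ℕ) (L : Fin r → Submodule k E), IsFrame L ∧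
      ∀ W : Submodule k E, span k (s ∩ W) = W → ∃ t : Finset (Fin r), W = ∑ i ∈ t, L i := by
  have : Finite s := (LinearIndependent.set_finite_of_isNoetherian hs).to_subtype
  let f := (Finite.equivFin s).symm
  let b : Fin (Nat.card s) → E := fun i ↦ f i
  have hb : LinearIndependent k b := hs.comp f f.injective
  have hb_range : Set.range b = s := by
    rw [show b = Subtype.val ∘ f from rfl, Set.range_comp, f.range_eq_univ, Set.image_univ,
      Subtype.range_coe]
  refine ⟨Nat.card s, fun i ↦ k ∙ b i, ⟨fun i ↦ finrank_span_singleton (hb.ne_zero i), ?_⟩, ?_⟩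
  · rw [DirectSum.isInternal_submodule_iff_iSupIndep_and_iSup_eq_top, ← span_range_eq_iSup,
      hb_range]
    exact ⟨hb.iSupIndep_span_singleton, hs_span⟩
  · intro W hW
    classical
    refine ⟨Finset.univ.filter (b · ∈ W), ?_⟩
    rw [sum_span_singleton, Finset.coe_filter]
    simp only [Finset.mem_univ, true_and]
    change W = span k (b '' (b ⁻¹' W))
    rw [Set.image_preimage_eq_range_inter, hb_range, hW]

/-- Any two prevaluations on a finite-dimensional vector space admit a common
adapted frame: any two points of the building of `GL(E)` lie in a common
apartment. -/
theorem stmt12 {k E : Type*} [Field k] [AddCommGroup E] [Module k E] [FiniteDimensional k E]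
    (v v' : E → ℚ) (hv : IsPrevaluation k v) (hv' : IsPrevaluation k v') :
    ∃ (r : ℕ) (L : Fin r → Submodule k E),
      IsFrame L ∧ AdaptedFrame v L ∧ AdaptedFrame v' L := by
  obtain ⟨s, hs, hs_span, hs_adapted⟩ := exists_linearIndepOn_span_inter_eq_of_isChain
    hv.antitone_filtration.isChain_range hv'.antitone_filtration.isChain_range
  obtain ⟨r, L, hL, hL_sum⟩ := exists_isFrame_of_linearIndepOn hs hs_span
  have adaptedFrame {w : E → ℚ} (hw : IsPrevaluation k w)
      (hsw : ∀ a, span k (s ∩ hw.filtration a) = hw.filtration a) : AdaptedFrame w L := by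
    intro a
    obtain ⟨t, ht⟩ := hL_sum _ (hsw a)
    exact ⟨t, congrArg SetLike.coe ht⟩
  exact ⟨r, L, hL, adaptedFrame hv fun a ↦ hs_adapted _ (.inl ⟨a, rfl⟩),
    adaptedFrame hv' fun a ↦ hs_adapted _ (.inr ⟨a, rfl⟩)⟩
end

section
/- Let E, E' be finite-dimensional vector spaces over a field k, let v, v' be prevaluations on E, E', and suppose the frame L = {L₁,…,L_r} is adapted to v and the frame L' = {L'₁,…,L'_s} is adapted to v'. Then the frame L ⊗ L' = { L_i ⊗ L'_j : 1 ≤ i ≤ r, 1 ≤ j ≤ s } in E ⊗ E' is adapted to the tensor product prevaluation v ⊗ v', and v ⊗ v' is the unique prevaluation adapted to L ⊗ L' satisfying (v ⊗ v')(e_i ⊗ e'_j) = v(e_i) + v'(e'_j) for all nonzero e_i ∈ L_i and e'_j ∈ L'_j. -/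
/-! Choosing a nonzero vector on each line of a frame turns it into a basis `b`, and `v` is
adapted to the frame exactly when `v w` is the minimum of `v (b i)` over the support of `w` in
`b`. In the tensor basis `b i ⊗ b' j`, writing `w = ∑ (w_{ij} • b i) ⊗ b' j` shows that
`min (v (b i) + v' (b' j))` over the support of `w` is attained by a representation of `w` by
pure tensors. No representation does better: each index `(i, j)` of the support of `w` lies in
the support of one of its terms `e ⊗ e'`, so `b i` and `b' j` occur in `e` and `e'`, and
adaptedness gives `v e ≤ v (b i)`, `v' e' ≤ v' (b' j)`. Hence `v ⊗ v'` is the minimum formula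
for the tensor basis; it is adapted to the tensor frame, and any function adapted to that frame
is determined by its values on the tensor basis. -/

open scoped TensorProduct

/-- The tensor product frame in `E ⊗ E'`, with member `(i, j)` the image
`L i ⊗ L' j` of `L i` and `L' j` in `E ⊗ E'`. -/
def tensorFrame {k E E' : Type*} [Field k] [AddCommGroup E] [Module k E]
    [AddCommGroup E'] [Module k E'] {ι ι' : Type*}
    (L : ι → Submodule k E) (L' : ι' → Submodule k E') (p : ι × ι') :
    Submodule k (E ⊗[k] E') :=
  Submodule.span k {w : E ⊗[k] E' | ∃ x ∈ L p.1, ∃ y ∈ L' p.2, w = x ⊗ₜ[k] y}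

open Submodule

section Frame

theorem Submodule.sum_span_singleton_eq_span_image {R M ι : Type*} [Semiring R]
    [AddCommMonoid M] [Module R M] (b : ι → M) (s : Finset ι) :
    (∑ i ∈ s, span R {b i}) = span R (b '' s) := by
  classical
  induction s using Finset.induction_on with
  | empty => simp
  | insert i s hi ih =>
    rw [Finset.sum_insert hi, ih, Finset.coe_insert, Set.image_insert_eq, span_insert,
      add_eq_sup]

theorem Module.Basis.mem_sum_span_singleton_iff {R M ι : Type*} [Semiring R]
    [AddCommMonoid M] [Module R M] (b : Module.Basis ι R M) (s : Finset ι) (w : M) :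
    w ∈ (∑ i ∈ s, span R {b i}) ↔ (b.repr w).support ⊆ s := by
  rw [sum_span_singleton_eq_span_image, b.mem_span_image, Finset.coe_subset]

theorem Module.Basis.apply_mem_sum_span_singleton_iff {R M ι : Type*} [Semiring R]
    [Nontrivial R] [AddCommMonoid M] [Module R M] (b : Module.Basis ι R M) (s : Finset ι)
    (i : ι) : b i ∈ (∑ j ∈ s, span R {b j}) ↔ i ∈ s := by
  rw [b.mem_sum_span_singleton_iff, b.repr_self, Finsupp.support_single _ one_ne_zero,
    Finset.singleton_subset_iff]

variable {k E ι : Type*} [Field k] [AddCommGroup E] [Module k E]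

theorem Module.Basis.isFrame_span_singleton [Fintype ι] [DecidableEq ι]
    (b : Module.Basis ι k E) : IsFrame fun i => span k {b i} := by
  refine ⟨fun i => finrank_span_singleton (b.ne_zero i), ?_⟩
  rw [DirectSum.isInternal_submodule_iff_iSupIndep_and_iSup_eq_top,
    ← span_range_eq_iSup, b.span_eq]
  exact ⟨b.linearIndependent.iSupIndep_span_singleton, rfl⟩

theorem IsFrame.exists_basis [Fintype ι] [DecidableEq ι] {L : ι → Submodule k E}
    (hL : IsFrame L) : ∃ b : Module.Basis ι k E, L = fun i => span k {b i} := by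
  have hline : ∀ i, ∃ x : E, x ≠ 0 ∧ L i = span k {x} := fun i => by
    obtain ⟨x, hx, hspan⟩ := finrank_eq_one_iff'.mp (hL.1 i)
    refine ⟨x, by simpa using hx, le_antisymm (fun y hy => ?_) ?_⟩
    · obtain ⟨c, hc⟩ := hspan ⟨y, hy⟩
      exact mem_span_singleton.mpr ⟨c, congrArg Subtype.val hc⟩
    · exact span_le.mpr (Set.singleton_subset_iff.mpr x.2)
  choose x hx0 hLx using hline
  have hL_eq : L = fun i => span k {x i} := funext hLx
  have hli : LinearIndependent k x :=
    (iSupIndep_iff_linearIndependent_of_ne_zero hx0).mp (hL_eq ▸ hL.2.submodule_iSupIndep)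
  have htop : ⊤ ≤ span k (Set.range x) := by
    rw [span_range_eq_iSup, ← hL_eq, hL.2.submodule_iSup_eq_top]
  exact ⟨Module.Basis.mk hli htop, by simpa using hL_eq⟩

end Frame

section Adapted

variable {k E ι : Type*} [Field k] [AddCommGroup E] [Module k E] {v : E → ℚ}
  (b : Module.Basis ι k E)

namespace AdaptedFrame

variable {b}

theorem le_of_repr_ne_zero (hv : AdaptedFrame v fun i => span k {b i}) {w : E} {i : ι}
    (hi : b.repr w i ≠ 0) : v w ≤ v (b i) := by
  obtain ⟨s, hs⟩ := hv (v w)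
  have hws : w ∈ (↑(∑ j ∈ s, span k {b j}) : Set E) := hs ▸ Or.inr le_rfl
  have hbs : b i ∈ (↑(∑ j ∈ s, span k {b j}) : Set E) :=
    (b.apply_mem_sum_span_singleton_iff s i).mpr
      ((b.mem_sum_span_singleton_iff s w).mp hws (Finsupp.mem_support_iff.mpr hi))
  rw [← hs] at hbs
  exact hbs.resolve_left (b.ne_zero i)

theorem eq_inf'_repr_support (hv : AdaptedFrame v fun i => span k {b i}) {w : E}
    (hne : (b.repr w).support.Nonempty) :
    v w = (b.repr w).support.inf' hne (v ∘ b) := by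
  have hw : w ≠ 0 := by rintro rfl; simp at hne
  refine le_antisymm (Finset.le_inf' _ _ fun i hi =>
    hv.le_of_repr_ne_zero (Finsupp.mem_support_iff.mp hi)) ?_
  obtain ⟨s, hs⟩ := hv ((b.repr w).support.inf' hne (v ∘ b))
  have hsupp : (b.repr w).support ⊆ s := fun i hi => by
    have hbi : b i ∈ (↑(∑ j ∈ s, span k {b j}) : Set E) := hs ▸ Or.inr (Finset.inf'_le _ hi)
    exact (b.apply_mem_sum_span_singleton_iff s i).mp hbi
  have hws : w ∈ (↑(∑ j ∈ s, span k {b j}) : Set E) :=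
    (b.mem_sum_span_singleton_iff s w).mpr hsupp
  rw [← hs] at hws
  exact hws.resolve_left hw

theorem apply_smul_basis (hv : AdaptedFrame v fun i => span k {b i}) {c : k} (hc : c ≠ 0)
    (i : ι) : v (c • b i) = v (b i) := by
  have hrepr : b.repr (c • b i) = Finsupp.single i c := by
    rw [map_smul, b.repr_self, Finsupp.smul_single, smul_eq_mul, mul_one]
  have hne : (b.repr (c • b i)).support.Nonempty := by
    rw [hrepr, Finsupp.support_single _ hc]
    exact Finset.singleton_nonempty i
  rw [hv.eq_inf'_repr_support hne]
  simp only [hrepr, Finsupp.support_single _ hc, Finset.inf'_singleton, Function.comp_apply]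

end AdaptedFrame

theorem adaptedFrame_of_eq_inf' [Fintype ι] (u : ι → ℚ)
    (hv : ∀ (w : E) (hne : (b.repr w).support.Nonempty), v w = (b.repr w).support.inf' hne u) :
    AdaptedFrame v fun i => span k {b i} := by
  classical
  intro a
  refine ⟨Finset.univ.filter (a ≤ u ·), Set.ext fun w => ?_⟩
  rw [Set.mem_ofPred_eq, SetLike.mem_coe, b.mem_sum_span_singleton_iff]
  rcases (b.repr w).support.eq_empty_or_nonempty with h | hne
  · have hw : w = 0 := b.repr.map_eq_zero_iff.mp (Finsupp.support_eq_empty.mp h)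
    simp [hw]
  · have hw : w ≠ 0 := by rintro rfl; simp at hne
    rw [hv w hne, Finset.le_inf'_iff]
    simp [hw, Finset.subset_iff]

end Adapted

section Tensor

variable {k E E' ι ι' : Type*} [Field k] [AddCommGroup E] [Module k E]
  [AddCommGroup E'] [Module k E'] {v : E → ℚ} {v' : E' → ℚ}

theorem Module.Basis.tensorFrame_span_singleton (b : Module.Basis ι k E)
    (b' : Module.Basis ι' k E') :
    tensorFrame (fun i => span k {b i}) (fun j => span k {b' j}) =
      fun p => span k {b.tensorProduct b' p} := by
  funext p
  refine le_antisymm (span_le.mpr ?_) (span_le.mpr (Set.singleton_subset_iff.mpr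
    (subset_span ⟨b p.1, mem_span_singleton_self _, b' p.2, mem_span_singleton_self _,
      b.tensorProduct_apply' b' p⟩)))
  rintro _ ⟨x, hx, y, hy, rfl⟩
  obtain ⟨c, rfl⟩ := mem_span_singleton.mp hx
  obtain ⟨d, rfl⟩ := mem_span_singleton.mp hy
  rw [SetLike.mem_coe, TensorProduct.smul_tmul_smul, ← b.tensorProduct_apply']
  exact smul_mem _ _ (mem_span_singleton_self _)

theorem inf'_mem_tensorVals_sum {α : Type*} (t : Finset α) (ht : t.Nonempty) (e : α → E)
    (e' : α → E') (he : ∀ p ∈ t, e p ≠ 0) (he' : ∀ p ∈ t, e' p ≠ 0) :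
    t.inf' ht (fun p => v (e p) + v' (e' p)) ∈ tensorVals k v v' (∑ p ∈ t, e p ⊗ₜ[k] e' p) := by
  have hm : 0 < t.card := t.card_pos.mpr ht
  let σ := t.equivFin.symm
  refine ⟨t.card, hm, fun i => e (σ i), fun i => e' (σ i), fun i => he _ (σ i).2,
    fun i => he' _ (σ i).2, ?_, ?_⟩
  · rw [← Finset.sum_coe_sort t, ← σ.sum_comp]
  · refine le_antisymm (Finset.le_inf' _ _ fun i _ => Finset.inf'_le _ (σ i).2)
      (Finset.le_inf' _ _ fun p hp => ?_)
    simpa [σ] using Finset.inf'_le (fun i => v (e (σ i)) + v' (e' (σ i)))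
      (Finset.mem_univ (t.equivFin ⟨p, hp⟩))

variable {b : Module.Basis ι k E} {b' : Module.Basis ι' k E'}

theorem AdaptedFrame.inf'_repr_support_mem_tensorVals
    (hv : AdaptedFrame v fun i => span k {b i}) (w : E ⊗[k] E')
    (hne : ((b.tensorProduct b').repr w).support.Nonempty) :
    ((b.tensorProduct b').repr w).support.inf' hne (fun p => v (b p.1) + v' (b' p.2)) ∈
      tensorVals k v v' w := by
  let c := (b.tensorProduct b').repr w
  have hrepr : w = ∑ p ∈ c.support, (c p • b p.1) ⊗ₜ[k] b' p.2 := by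
    conv_lhs => rw [← (b.tensorProduct b').linearCombination_repr w,
      Finsupp.linearCombination_apply]
    refine Finset.sum_congr rfl fun p _ => ?_
    dsimp only
    rw [b.tensorProduct_apply', TensorProduct.smul_tmul']
  have hmem := inf'_mem_tensorVals_sum (k := k) (v := v) (v' := v') _ hne
    (fun p => c p • b p.1) (fun p => b' p.2)
    (fun p hp => smul_ne_zero (Finsupp.mem_support_iff.mp hp) (b.ne_zero _))
    (fun p _ => b'.ne_zero _)
  rw [← hrepr] at hmem
  convert hmem using 1
  refine Finset.inf'_congr _ rfl fun p hp => ?_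
  rw [hv.apply_smul_basis (Finsupp.mem_support_iff.mp hp)]

theorem AdaptedFrame.le_of_mem_tensorVals (hv : AdaptedFrame v fun i => span k {b i})
    (hv' : AdaptedFrame v' fun j => span k {b' j}) {w : E ⊗[k] E'} {q : ℚ}
    (hq : q ∈ tensorVals k v v' w) {p : ι × ι'}
    (hp : p ∈ ((b.tensorProduct b').repr w).support) : q ≤ v (b p.1) + v' (b' p.2) := by
  obtain ⟨m, hm, e, e', he, he', rfl, rfl⟩ := hq
  obtain ⟨i, hi⟩ : ∃ i, (b.tensorProduct b').repr (e i ⊗ₜ[k] e' i) p ≠ 0 := by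
    by_contra! h
    rw [Finsupp.mem_support_iff, map_sum, Finsupp.finsetSum_apply] at hp
    exact hp (Finset.sum_eq_zero fun i _ => h i)
  rw [b.tensorProduct_repr_tmul_apply, smul_eq_mul] at hi
  calc Finset.univ.inf' _ (fun i => v (e i) + v' (e' i))
      ≤ v (e i) + v' (e' i) := Finset.inf'_le _ (Finset.mem_univ i)
    _ ≤ v (b p.1) + v' (b' p.2) := add_le_add
        (hv.le_of_repr_ne_zero (right_ne_zero_of_mul hi))
        (hv'.le_of_repr_ne_zero (left_ne_zero_of_mul hi))

theorem AdaptedFrame.isGreatest_tensorVals (hv : AdaptedFrame v fun i => span k {b i})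
    (hv' : AdaptedFrame v' fun j => span k {b' j}) {w : E ⊗[k] E'}
    (hne : ((b.tensorProduct b').repr w).support.Nonempty) :
    IsGreatest (tensorVals k v v' w)
      (((b.tensorProduct b').repr w).support.inf' hne fun p => v (b p.1) + v' (b' p.2)) :=
  ⟨hv.inf'_repr_support_mem_tensorVals w hne, fun _ hq =>
    Finset.le_inf' _ _ fun _ hp => hv.le_of_mem_tensorVals hv' hq hp⟩

theorem AdaptedFrame.apply_tmul {T : E ⊗[k] E' → ℚ}
    (hv : AdaptedFrame v fun i => span k {b i}) (hv' : AdaptedFrame v' fun j => span k {b' j})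
    (hT : AdaptedFrame T fun p => span k {b.tensorProduct b' p})
    (hTb : ∀ p, T (b.tensorProduct b' p) = v (b p.1) + v' (b' p.2)) {i : ι} {j : ι'}
    {x : E} {y : E'} (hx : x ∈ span k {b i}) (hy : y ∈ span k {b' j}) (hx0 : x ≠ 0)
    (hy0 : y ≠ 0) : T (x ⊗ₜ[k] y) = v x + v' y := by
  obtain ⟨c, rfl⟩ := mem_span_singleton.mp hx
  obtain ⟨d, rfl⟩ := mem_span_singleton.mp hy
  have hc : c ≠ 0 := left_ne_zero_of_smul hx0
  have hd : d ≠ 0 := left_ne_zero_of_smul hy0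
  rw [TensorProduct.smul_tmul_smul, ← b.tensorProduct_apply b' i j,
    hT.apply_smul_basis (mul_ne_zero hc hd), hTb, hv.apply_smul_basis hc,
    hv'.apply_smul_basis hd]

end Tensor

theorem stmt13_general {k E E' : Type*} [Field k] [AddCommGroup E] [Module k E]
    [AddCommGroup E'] [Module k E']
    (v : E → ℚ) (v' : E' → ℚ)
    {r s : ℕ} (L : Fin r → Submodule k E) (L' : Fin s → Submodule k E')
    (hL : IsFrame L) (hL' : IsFrame L')
    (hvL : AdaptedFrame v L) (hv'L' : AdaptedFrame v' L')
    (T : E ⊗[k] E' → ℚ)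
    (hT : ∀ w : E ⊗[k] E', w ≠ 0 → IsGreatest (tensorVals k v v' w) (T w)) :
    IsFrame (tensorFrame L L') ∧
    AdaptedFrame T (tensorFrame L L') ∧
    (∀ (i : Fin r) (j : Fin s) (x : E) (y : E'), x ∈ L i → y ∈ L' j →
        x ≠ 0 → y ≠ 0 → T (x ⊗ₜ[k] y) = v x + v' y) ∧
    (∀ T' : E ⊗[k] E' → ℚ, IsPrevaluation k T' → AdaptedFrame T' (tensorFrame L L') →
        (∀ (i : Fin r) (j : Fin s) (x : E) (y : E'), x ∈ L i → y ∈ L' j →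
            x ≠ 0 → y ≠ 0 → T' (x ⊗ₜ[k] y) = v x + v' y) →
        ∀ w : E ⊗[k] E', w ≠ 0 → T' w = T w) := by
  obtain ⟨b, rfl⟩ := hL.exists_basis
  obtain ⟨b', rfl⟩ := hL'.exists_basis
  let B := b.tensorProduct b'
  have hTB : ∀ w (hne : (B.repr w).support.Nonempty),
      T w = (B.repr w).support.inf' hne fun p => v (b p.1) + v' (b' p.2) := fun w hne =>
    (hT w (B.repr.map_ne_zero_iff.mp (Finsupp.support_nonempty_iff.mp hne))).unique
      (hvL.isGreatest_tensorVals hv'L' hne)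
  have hTa : AdaptedFrame T fun p => span k {B p} := adaptedFrame_of_eq_inf' B _ hTB
  have hTb : ∀ p, T (B p) = v (b p.1) + v' (b' p.2) := fun p => by simpa using hTB (B p)
  rw [b.tensorFrame_span_singleton b']
  refine ⟨B.isFrame_span_singleton, hTa, fun i j x y => hvL.apply_tmul hv'L' hTa hTb,
    fun T' _ hT'a hT'b w hw => ?_⟩
  have hne := Finsupp.support_nonempty_iff.mpr (B.repr.map_ne_zero_iff.mpr hw)
  rw [hT'a.eq_inf'_repr_support hne, hTB w hne]
  refine Finset.inf'_congr _ rfl fun p _ => ?_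
  rw [Function.comp_apply, b.tensorProduct_apply']
  exact hT'b p.1 p.2 _ _ (mem_span_singleton_self _) (mem_span_singleton_self _)
    (b.ne_zero _) (b'.ne_zero _)

/-- If the frame `L` is adapted to `v` and `L'` is adapted to `v'`, then the
tensor product frame `L ⊗ L'` is a frame of `E ⊗ E'` adapted to the tensor
product prevaluation `T = v ⊗ v'`; moreover `T` is the unique prevaluation
adapted to `L ⊗ L'` with `T (x ⊗ y) = v x + v' y` for nonzero `x ∈ L i`,
`y ∈ L' j`. -/
theorem stmt13 {k E E' : Type*} [Field k] [AddCommGroup E] [Module k E]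
    [AddCommGroup E'] [Module k E'] [FiniteDimensional k E] [FiniteDimensional k E']
    (v : E → ℚ) (v' : E' → ℚ) (hv : IsPrevaluation k v) (hv' : IsPrevaluation k v')
    {r s : ℕ} (L : Fin r → Submodule k E) (L' : Fin s → Submodule k E')
    (hL : IsFrame L) (hL' : IsFrame L')
    (hvL : AdaptedFrame v L) (hv'L' : AdaptedFrame v' L')
    (T : E ⊗[k] E' → ℚ)
    (hT : ∀ w : E ⊗[k] E', w ≠ 0 → IsGreatest (tensorVals k v v' w) (T w)) :
    IsFrame (tensorFrame L L') ∧
    AdaptedFrame T (tensorFrame L L') ∧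
    (∀ (i : Fin r) (j : Fin s) (x : E) (y : E'), x ∈ L i → y ∈ L' j →
        x ≠ 0 → y ≠ 0 → T (x ⊗ₜ[k] y) = v x + v' y) ∧
    (∀ T' : E ⊗[k] E' → ℚ, IsPrevaluation k T' → AdaptedFrame T' (tensorFrame L L') →
        (∀ (i : Fin r) (j : Fin s) (x : E) (y : E'), x ∈ L i → y ∈ L' j →
            x ≠ 0 → y ≠ 0 → T' (x ⊗ₜ[k] y) = v x + v' y) →
        ∀ w : E ⊗[k] E', w ≠ 0 → T' w = T w) :=
  stmt13_general v v' L L' hL hL' hvL hv'L' T hT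
end
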